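/- arXiv:2312.04462 — 8 statements merged into one kernel-verified Lean document; each statement's English description precedes it below -/
import Mathlib

section
/- Let f : [0,1]² → ℝ be integrable, a = (α, α′) ∈ ℕ₊ × ℕ₊, and let f_a be the moment-recovered approximation of f. Then for every (x,y) ∈ [0,1]², f_a(x,y) = ∫₀¹∫₀¹ β_α(t,x) β_{α′}(s,y) f(t,s) dt ds, where β_α(t,x) = t^{⌊αx⌋}(1−t)^{α−⌊αx⌋}/B(⌊αx⌋+1, α−⌊αx⌋+1) is the beta kernel with Beta function B. -/
open MeasureTheory Filter Finset

/-- Geometric moments of `f` on `[0,1]²`: `m_f(k,j) = ∫₀¹∫₀¹ x^k y^j f(x,y) dx dy`. -/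
noncomputable def mom (f : ℝ × ℝ → ℝ) (k j : ℕ) : ℝ :=
  ∫ x in (0:ℝ)..1, ∫ y in (0:ℝ)..1, x ^ k * y ^ j * f (x, y)

/-- Moment-recovered approximation `f_a` of `f` of order `a = (α, α′)`. -/
noncomputable def fApprox (f : ℝ × ℝ → ℝ) (α α' : ℕ) (x y : ℝ) : ℝ :=
  ((Nat.factorial (α + 1) : ℝ) * (Nat.factorial (α' + 1) : ℝ) /
      ((Nat.factorial ⌊(α : ℝ) * x⌋₊ : ℝ) * (Nat.factorial ⌊(α' : ℝ) * y⌋₊ : ℝ))) *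
    ∑ k ∈ Finset.range (α - ⌊(α : ℝ) * x⌋₊ + 1),
      ∑ j ∈ Finset.range (α' - ⌊(α' : ℝ) * y⌋₊ + 1),
        (-1 : ℝ) ^ (k + j) * mom f (k + ⌊(α : ℝ) * x⌋₊) (j + ⌊(α' : ℝ) * y⌋₊) /
          ((Nat.factorial k : ℝ) * (Nat.factorial j : ℝ) *
            (Nat.factorial (α - ⌊(α : ℝ) * x⌋₊ - k) : ℝ) *
            (Nat.factorial (α' - ⌊(α' : ℝ) * y⌋₊ - j) : ℝ))

/-- The Beta function `B(u,v) = Γ(u)Γ(v)/Γ(u+v)`. -/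
noncomputable def betaFn (u v : ℝ) : ℝ :=
  Real.Gamma u * Real.Gamma v / Real.Gamma (u + v)

/-- The beta kernel `β_α(t,x) = t^⌊αx⌋ (1−t)^(α−⌊αx⌋) / B(⌊αx⌋+1, α−⌊αx⌋+1)`. -/
noncomputable def betaKer (α : ℕ) (x t : ℝ) : ℝ :=
  t ^ ⌊(α : ℝ) * x⌋₊ * (1 - t) ^ (α - ⌊(α : ℝ) * x⌋₊) /
    betaFn ((⌊(α : ℝ) * x⌋₊ : ℝ) + 1) (((α - ⌊(α : ℝ) * x⌋₊ : ℕ) : ℝ) + 1)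

lemma betaFn_nat (m r : ℕ) :
    betaFn ((m:ℝ)+1) ((r:ℝ)+1) = (m.factorial : ℝ) * (r.factorial : ℝ) / ((m+r+1).factorial : ℝ) := by
  unfold betaFn
  rw [Real.Gamma_nat_eq_factorial, Real.Gamma_nat_eq_factorial,
    show ((m:ℝ)+1) + ((r:ℝ)+1) = ((m+r+1 : ℕ):ℝ) + 1 by push_cast; ring,
    Real.Gamma_nat_eq_factorial]

lemma one_sub_pow_expand (t : ℝ) (r : ℕ) :
    (1 - t)^r = ∑ k ∈ range (r+1), (-1:ℝ)^k * t^k * (r.choose k : ℝ) := by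
  rw [show (1:ℝ) - t = -t + 1 by ring, add_pow]
  refine Finset.sum_congr rfl fun k _ => ?_
  rw [neg_pow]
  ring

lemma betaKer_expand (α : ℕ) (x t : ℝ) (h : ⌊(α:ℝ)*x⌋₊ ≤ α) :
    betaKer α x t = ∑ k ∈ range (α - ⌊(α:ℝ)*x⌋₊ + 1),
      (((α - ⌊(α:ℝ)*x⌋₊).choose k : ℝ) * (-1:ℝ)^k * ((α+1).factorial : ℝ) /
        ((⌊(α:ℝ)*x⌋₊.factorial : ℝ) * ((α - ⌊(α:ℝ)*x⌋₊).factorial : ℝ))) * t^(k + ⌊(α:ℝ)*x⌋₊) := by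
  set m := ⌊(α:ℝ)*x⌋₊ with hm
  set r := α - m with hr
  have hmr : m + r + 1 = α + 1 := by omega
  unfold betaKer
  rw [← hm, ← hr, betaFn_nat m r, hmr, one_sub_pow_expand, Finset.mul_sum, Finset.sum_div]
  refine Finset.sum_congr rfl fun k _ => ?_
  have h1 : ((m.factorial : ℝ)) ≠ 0 := Nat.cast_ne_zero.mpr (Nat.factorial_ne_zero m)
  have h2 : ((r.factorial : ℝ)) ≠ 0 := Nat.cast_ne_zero.mpr (Nat.factorial_ne_zero r)
  have h3 : (((α+1).factorial : ℝ)) ≠ 0 := Nat.cast_ne_zero.mpr (Nat.factorial_ne_zero _)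
  rw [pow_add]
  field_simp

theorem stmt_1 (f : ℝ × ℝ → ℝ)
    (hf : IntegrableOn f (Set.Icc (0:ℝ) 1 ×ˢ Set.Icc (0:ℝ) 1))
    (α α' : ℕ) (hα : 0 < α) (hα' : 0 < α')
    (x y : ℝ) (hx : x ∈ Set.Icc (0:ℝ) 1) (hy : y ∈ Set.Icc (0:ℝ) 1) :
    fApprox f α α' x y =
      ∫ t in (0:ℝ)..1, ∫ s in (0:ℝ)..1, betaKer α x t * betaKer α' y s * f (t, s) := by
  have h01 : (0:ℝ) ≤ 1 := zero_le_one
  set m := ⌊(α:ℝ)*x⌋₊ with hm_def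
  set n := ⌊(α':ℝ)*y⌋₊ with hn_def
  have hm : m ≤ α := by
    have hle : (α:ℝ)*x ≤ (α:ℝ) := mul_le_of_le_one_right (Nat.cast_nonneg α) hx.2
    calc m ≤ ⌊(α:ℝ)⌋₊ := Nat.floor_le_floor hle
    _ = α := Nat.floor_natCast α
  have hn : n ≤ α' := by
    have hle : (α':ℝ)*y ≤ (α':ℝ) := mul_le_of_le_one_right (Nat.cast_nonneg α') hy.2
    calc n ≤ ⌊(α':ℝ)⌋₊ := Nat.floor_le_floor hle
    _ = α' := Nat.floor_natCast α'
  set μ := volume.restrict (Set.Ioc (0:ℝ) 1) with hμ_def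
  -- Integrability facts
  have hfprod : Integrable f (μ.prod μ) := by
    have h1 : IntegrableOn f (Set.Ioc (0:ℝ) 1 ×ˢ Set.Ioc (0:ℝ) 1) :=
      hf.mono_set (Set.prod_mono Set.Ioc_subset_Icc_self Set.Ioc_subset_Icc_self)
    rwa [IntegrableOn, Measure.volume_eq_prod, ← Measure.prod_restrict] at h1
  have hprodres : μ.prod μ = (volume.prod volume).restrict
      (Set.Ioc (0:ℝ) 1 ×ˢ Set.Ioc (0:ℝ) 1) := Measure.prod_restrict _ _
  have hg : ∀ a b : ℕ, Integrable (fun p : ℝ×ℝ => p.1^a * p.2^b * f p) (μ.prod μ) := by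
    intro a b
    refine hfprod.bdd_mul (c := 1)
      (((continuous_fst.pow a).mul (continuous_snd.pow b)).aestronglyMeasurable) ?_
    rw [hprodres]
    filter_upwards [self_mem_ae_restrict
      ((measurableSet_Ioc.prod measurableSet_Ioc))] with p hp
    obtain ⟨hp1, hp2⟩ := hp
    have h1 : |p.1| ≤ 1 := abs_le.mpr ⟨by linarith [hp1.1], hp1.2⟩
    have h2 : |p.2| ≤ 1 := abs_le.mpr ⟨by linarith [hp2.1], hp2.2⟩
    calc ‖p.1^a * p.2^b‖ = |p.1|^a * |p.2|^b := by
          rw [norm_mul]; simp [abs_pow]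
    _ ≤ 1 := by
          have hA : |p.1|^a ≤ 1 := pow_le_one₀ (abs_nonneg _) h1
          have hB : |p.2|^b ≤ 1 := pow_le_one₀ (abs_nonneg _) h2
          nlinarith [pow_nonneg (abs_nonneg p.1) a, pow_nonneg (abs_nonneg p.2) b]
  have hslice : ∀ᵐ t ∂μ, ∀ a b : ℕ, Integrable (fun s => t^a * s^b * f (t,s)) μ := by
    rw [ae_all_iff]
    intro a
    rw [ae_all_iff]
    intro b
    exact (hg a b).prod_right_ae
  have hmarg : ∀ a b : ℕ, Integrable (fun t => ∫ s, t^a * s^b * f (t,s) ∂μ) μ :=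
    fun a b => (hg a b).integral_prod_left
  -- coefficients
  set Cf : ℕ → ℕ → ℝ := fun k j =>
    ((α-m).choose k : ℝ) * ((α'-n).choose j : ℝ) * (-1:ℝ)^(k+j) *
      ((α+1).factorial : ℝ) * ((α'+1).factorial : ℝ) /
      ((m.factorial : ℝ) * (n.factorial : ℝ) * ((α-m).factorial : ℝ) * ((α'-n).factorial : ℝ))
    with hCf_def
  -- pointwise kernel expansion
  have hker : ∀ t s : ℝ, betaKer α x t * betaKer α' y s * f (t,s) =
      ∑ k ∈ range (α-m+1), ∑ j ∈ range (α'-n+1),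
        Cf k j * (t^(k+m) * s^(j+n) * f (t,s)) := by
    intro t s
    rw [betaKer_expand α x t hm, betaKer_expand α' y s hn, Finset.sum_mul_sum, Finset.sum_mul]
    refine Finset.sum_congr rfl fun k _ => ?_
    rw [Finset.sum_mul]
    refine Finset.sum_congr rfl fun j _ => ?_
    simp only [hCf_def, ← hm_def, ← hn_def, pow_add (-1:ℝ)]
    ring
  -- rewrite RHS as μ-integrals
  rw [intervalIntegral.integral_of_le h01]
  have hinner : ∀ t : ℝ, (∫ s in (0:ℝ)..1, betaKer α x t * betaKer α' y s * f (t,s)) =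
      ∫ s, betaKer α x t * betaKer α' y s * f (t,s) ∂μ :=
    fun t => intervalIntegral.integral_of_le h01
  simp only [hinner]
  -- main computation on RHS
  have hRHS : (∫ t, ∫ s, betaKer α x t * betaKer α' y s * f (t,s) ∂μ ∂μ) =
      ∑ k ∈ range (α-m+1), ∑ j ∈ range (α'-n+1),
        Cf k j * ∫ t, ∫ s, t^(k+m) * s^(j+n) * f (t,s) ∂μ ∂μ := by
    have step1 : (∫ t, ∫ s, betaKer α x t * betaKer α' y s * f (t,s) ∂μ ∂μ) =
        ∫ t, (∑ k ∈ range (α-m+1), ∑ j ∈ range (α'-n+1),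
          Cf k j * ∫ s, t^(k+m) * s^(j+n) * f (t,s) ∂μ) ∂μ := by
      refine integral_congr_ae ?_
      filter_upwards [hslice] with t ht
      simp only [hker]
      rw [integral_finset_sum _ (fun k _ => integrable_finset_sum _
        (fun j _ => ((ht (k+m) (j+n)).const_mul _)))]
      refine Finset.sum_congr rfl fun k _ => ?_
      rw [integral_finset_sum _ (fun j _ => ((ht (k+m) (j+n)).const_mul _))]
      refine Finset.sum_congr rfl fun j _ => ?_
      rw [integral_const_mul _ _]
    rw [step1, integral_finset_sum _ (fun k _ => integrable_finset_sum _
      (fun j _ => ((hmarg (k+m) (j+n)).const_mul _)))]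
    refine Finset.sum_congr rfl fun k _ => ?_
    rw [integral_finset_sum _ (fun j _ => ((hmarg (k+m) (j+n)).const_mul _))]
    refine Finset.sum_congr rfl fun j _ => ?_
    rw [integral_const_mul _ _]
  rw [hRHS]
  -- LHS: fApprox as the same sum
  rw [fApprox, Finset.mul_sum]
  refine Finset.sum_congr rfl fun k hk => ?_
  rw [Finset.mul_sum]
  refine Finset.sum_congr rfl fun j hj => ?_
  have hk' : k ≤ α - m := Nat.lt_succ_iff.mp (Finset.mem_range.mp hk)
  have hj' : j ≤ α' - n := Nat.lt_succ_iff.mp (Finset.mem_range.mp hj)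
  have hmomeq : mom f (k+m) (j+n) = ∫ t, ∫ s, t^(k+m) * s^(j+n) * f (t,s) ∂μ ∂μ := by
    rw [mom, intervalIntegral.integral_of_le h01]
    exact integral_congr_ae (Eventually.of_forall fun t =>
      intervalIntegral.integral_of_le h01)
  rw [← hmomeq, hCf_def]
  -- coefficient identity
  have hc1 : ((α-m).choose k : ℝ) * (k.factorial : ℝ) * ((α-m-k).factorial : ℝ)
      = ((α-m).factorial : ℝ) := by
    exact_mod_cast congrArg (Nat.cast (R := ℝ))
      (Nat.choose_mul_factorial_mul_factorial hk')
  have hc2 : ((α'-n).choose j : ℝ) * (j.factorial : ℝ) * ((α'-n-j).factorial : ℝ)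
      = ((α'-n).factorial : ℝ) := by
    exact_mod_cast congrArg (Nat.cast (R := ℝ))
      (Nat.choose_mul_factorial_mul_factorial hj')
  have ne0 : ∀ r : ℕ, ((r.factorial : ℝ)) ≠ 0 :=
    fun r => Nat.cast_ne_zero.mpr (Nat.factorial_ne_zero r)
  field_simp
  rw [← hc1, ← hc2]
  ring
end

section
/- Fix x ∈ (0,1) and d with 0 < d < min(x, 1−x). Then there exists B < 1 such that for all α ∈ ℕ₊, ∫_{D_>} g(t,x)^α dt ≤ B^α, where D_> = {t ∈ [0,1] : |t − x| > d} and g(t,x) = (t/x)^x · ((1−t)/(1−x))^{1−x}. -/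
/-!
By weighted AM–GM, `g(t,x) ≤ x · (t/x) + (1 - x) · (1 - t)/(1 - x) = 1`, with equality only at
`t = x`. So the continuous function `g(·,x)` stays below `1` on the compact set
`{t ∈ [0,1] : |t - x| ≥ d}`, hence below some `B < 1`; as `D_>` has measure at most `1`, the
integral of `g^α` over it is at most `B^α`.
-/

open MeasureTheory

/-- `g(t,x) = (t/x)^x · ((1−t)/(1−x))^(1−x)` (real powers, so `g(0,x) = g(1,x) = 0`
for `x ∈ (0,1)`). -/
noncomputable def gFun (x t : ℝ) : ℝ :=
  (t / x) ^ x * ((1 - t) / (1 - x)) ^ (1 - x)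

theorem Real.geom_mean_lt_arith_mean2_weighted {w a b : ℝ} (hw₀ : 0 < w) (hw₁ : w < 1)
    (ha : 0 ≤ a) (hb : 0 ≤ b) (hab : a ≠ b) :
    a ^ w * b ^ (1 - w) < w * a + (1 - w) * b := by
  have h := (Real.geom_mean_lt_arith_mean_weighted_iff_of_pos Finset.univ ![w, 1 - w] ![a, b]
    (by simp [Fin.forall_fin_two, hw₀, hw₁]) (by simp [Fin.sum_univ_two])
    (by simp [Fin.forall_fin_two, ha, hb])).2
    ⟨0, Finset.mem_univ _, 1, Finset.mem_univ _, by simpa using hab⟩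
  simpa [Fin.prod_univ_two, Fin.sum_univ_two] using h

theorem IsCompact.exists_lt_forall_le_of_forall_lt {α β : Type*} [TopologicalSpace β]
    [LinearOrder α] [TopologicalSpace α] [ClosedIciTopology α] [NoMinOrder α]
    {K : Set β} (hK : IsCompact K) {f : β → α} (hf : ContinuousOn f K) {c : α}
    (h : ∀ t ∈ K, f t < c) : ∃ B < c, ∀ t ∈ K, f t ≤ B := by
  rcases K.eq_empty_or_nonempty with rfl | hne
  · obtain ⟨B, hB⟩ := exists_lt c
    exact ⟨B, hB, by simp⟩
  · obtain ⟨t₀, ht₀, hmax⟩ := hK.exists_isMaxOn hne hf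
    exact ⟨f t₀, h t₀ ht₀, hmax⟩

theorem norm_setIntegral_le_of_norm_le_of_measure_le_one {X E : Type*} [MeasurableSpace X]
    [NormedAddCommGroup E] [NormedSpace ℝ E] {μ : Measure X} {s : Set X} {f : X → E} {C : ℝ}
    (hC : 0 ≤ C) (hs : μ s ≤ 1) (hf : ∀ t ∈ s, ‖f t‖ ≤ C) :
    ‖∫ t in s, f t ∂μ‖ ≤ C :=
  calc ‖∫ t in s, f t ∂μ‖ ≤ C * μ.real s :=
        norm_setIntegral_le_of_norm_le_const (hs.trans_lt ENNReal.one_lt_top) hf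
    _ ≤ C * 1 := by
        gcongr
        exact ENNReal.toReal_le_of_le_ofReal zero_le_one (by simpa using hs)
    _ = C := mul_one C

section gFun

variable {x t : ℝ}

theorem gFun_nonneg (hx : x ∈ Set.Ioo (0:ℝ) 1) (ht : t ∈ Set.Icc (0:ℝ) 1) : 0 ≤ gFun x t :=
  mul_nonneg (Real.rpow_nonneg (div_nonneg ht.1 hx.1.le) _)
    (Real.rpow_nonneg (div_nonneg (by linarith [ht.2]) (by linarith [hx.2])) _)

theorem gFun_lt_one (hx : x ∈ Set.Ioo (0:ℝ) 1) (ht : t ∈ Set.Icc (0:ℝ) 1) (htx : t ≠ x) :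
    gFun x t < 1 := by
  obtain ⟨hx₀, hx₁⟩ := hx
  have hx₁' : (1:ℝ) - x ≠ 0 := by linarith
  have hne : t / x ≠ (1 - t) / (1 - x) := by
    rw [Ne, div_eq_div_iff hx₀.ne' hx₁']
    intro h
    exact htx (by linarith)
  calc gFun x t < x * (t / x) + (1 - x) * ((1 - t) / (1 - x)) :=
        Real.geom_mean_lt_arith_mean2_weighted hx₀ hx₁ (div_nonneg ht.1 hx₀.le)
          (div_nonneg (by linarith [ht.2]) (by linarith)) hne
    _ = 1 := by field_simp; ring

theorem continuous_gFun (hx : x ∈ Set.Ioo (0:ℝ) 1) : Continuous (gFun x) :=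
  ((continuous_id.div_const x).rpow_const fun _ => Or.inr hx.1.le).mul
    (((continuous_const.sub continuous_id).div_const (1 - x)).rpow_const
      fun _ => Or.inr (by linarith [hx.2]))

end gFun

theorem stmt_3_general (x d : ℝ) (hx : x ∈ Set.Ioo (0:ℝ) 1) (hd : 0 < d) :
    ∃ B : ℝ, B < 1 ∧ ∀ α : ℕ, 0 < α →
      (∫ t in {t : ℝ | t ∈ Set.Icc (0:ℝ) 1 ∧ |t - x| > d}, gFun x t ^ α) ≤ B ^ α := by
  set K : Set ℝ := Set.Icc 0 1 ∩ {t | d ≤ |t - x|}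
  have hK : IsCompact K :=
    isCompact_Icc.inter_right (isClosed_le continuous_const (by fun_prop))
  have hlt : ∀ t ∈ K, gFun x t < 1 := fun t ht =>
    gFun_lt_one hx ht.1 fun htx => hd.not_ge (by simpa [htx] using ht.2)
  obtain ⟨B, hB, hle⟩ := hK.exists_lt_forall_le_of_forall_lt (continuous_gFun hx).continuousOn hlt
  refine ⟨max B 0, max_lt hB one_pos, fun α _ => ?_⟩
  refine (Real.le_norm_self _).trans (norm_setIntegral_le_of_norm_le_of_measure_le_one
    (by positivity) ?_ fun t ht => ?_)
  · exact (measure_mono fun t ht => ht.1).trans (by simp)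
  · have hg := gFun_nonneg hx ht.1
    rw [Real.norm_of_nonneg (pow_nonneg hg α)]
    exact pow_le_pow_left₀ hg ((hle t ⟨ht.1, ht.2.le⟩).trans (le_max_left B 0)) α

theorem stmt_3 (x d : ℝ) (hx : x ∈ Set.Ioo (0:ℝ) 1) (hd : 0 < d)
    (hd' : d < min x (1 - x)) :
    ∃ B : ℝ, B < 1 ∧ ∀ α : ℕ, 0 < α →
      (∫ t in {t : ℝ | t ∈ Set.Icc (0:ℝ) 1 ∧ |t - x| > d}, gFun x t ^ α) ≤ B ^ α :=
  stmt_3_general x d hx hd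
end

section
/- Fix x ∈ (0,1) and d with 0 < d < min(x, 1−x)/2. Then there exist B < 1 and α₀ such that for all real α ≥ α₀, ∫_{D_>} β̃_α(t,x) dt ≤ B^α · √((α+2)/(2π x (1−x))), where D_> = {t ∈ [0,1] : |t − x| > d} and β̃_α(t,x) = t^{αx}(1−t)^{α(1−x)} / B(αx+1, α(1−x)+1) is the beta density with shape parameters αx+1 and α(1−x)+1. -/
open MeasureTheory

/-- The real-parameter beta kernel: the beta density with shape parameters
`αx+1` and `α(1−x)+1`, i.e. `β̃_α(t,x) = t^(αx)(1−t)^(α(1−x)) / B(αx+1, α(1−x)+1)`. -/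
noncomputable def betaKerR (α x t : ℝ) : ℝ :=
  t ^ (α * x) * (1 - t) ^ (α * (1 - x)) / betaFn (α * x + 1) (α * (1 - x) + 1)

/-!
The numerator of the kernel is `φ(t)^α` with `φ(t) = t^x (1-t)^(1-x)` (`betaKerBase x`),
a function that increases on `[0, x]` and decreases on `[x, 1]`. Off the `d`-neighbourhood of `x`
we have `φ ≤ a := max (φ (x-d)) (φ (x+d))`, while on one of the intervals `[x - d/2, x]`,
`[x, x + d/2]` we have `φ ≥ c` for some `c > a`. Hence the tail integral of `φ^α` is at most `a^α`,
the Beta function (the integral of `φ^α` over `[0,1]`) is at least `(d/2) c^α`, and their ratio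
`(2/d) (a/c)^α` is eventually below `B^α` for any `B ∈ (a/c, 1)`; the square-root factor is at
least `1`.
-/

open Set Filter Topology

theorem betaFn_add_one_eq_integral {p q : ℝ} (hp : -1 < p) (hq : -1 < q) :
    betaFn (p + 1) (q + 1) = ∫ t in (0:ℝ)..1, t ^ p * (1 - t) ^ q := by
  have hbeta : Complex.betaIntegral ↑(p + 1) ↑(q + 1)
      = ↑(∫ t in (0:ℝ)..1, t ^ p * (1 - t) ^ q) := by
    rw [Complex.betaIntegral, ← intervalIntegral.integral_ofReal]
    refine intervalIntegral.integral_congr fun t ht => ?_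
    rw [uIcc_of_le zero_le_one] at ht
    push_cast
    rw [Complex.ofReal_cpow ht.1, Complex.ofReal_cpow (sub_nonneg.2 ht.2)]
    simp
  have h := Complex.Gamma_mul_Gamma_eq_betaIntegral (s := ↑(p + 1)) (t := ↑(q + 1))
    (by rw [Complex.ofReal_re]; linarith) (by rw [Complex.ofReal_re]; linarith)
  rw [hbeta, ← Complex.ofReal_add, Complex.Gamma_ofReal, Complex.Gamma_ofReal,
    Complex.Gamma_ofReal] at h
  have hΓ : Real.Gamma (p + 1 + (q + 1)) ≠ 0 := (Real.Gamma_pos_of_pos (by linarith)).ne'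
  rw [betaFn, div_eq_iff hΓ]
  exact_mod_cast h.trans (mul_comm _ _)

noncomputable def betaKerBase (x t : ℝ) : ℝ := t ^ x * (1 - t) ^ (1 - x)

section betaKerBase

variable {x : ℝ}

theorem betaKerBase_pos {t : ℝ} (ht : t ∈ Ioo (0:ℝ) 1) : 0 < betaKerBase x t :=
  mul_pos (Real.rpow_pos_of_pos ht.1 _) (Real.rpow_pos_of_pos (sub_pos.2 ht.2) _)

theorem betaKerBase_nonneg {t : ℝ} (ht : t ∈ Icc (0:ℝ) 1) : 0 ≤ betaKerBase x t :=
  mul_nonneg (Real.rpow_nonneg ht.1 _) (Real.rpow_nonneg (sub_nonneg.2 ht.2) _)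

theorem betaKerBase_eq_exp {t : ℝ} (ht : t ∈ Ioo (0:ℝ) 1) :
    betaKerBase x t = Real.exp (x * Real.log t + (1 - x) * Real.log (1 - t)) := by
  rw [betaKerBase, Real.rpow_def_of_pos ht.1, Real.rpow_def_of_pos (sub_pos.2 ht.2),
    ← Real.exp_add, mul_comm x, mul_comm (1 - x)]

theorem betaKerBase_rpow {t : ℝ} (α : ℝ) (ht : t ∈ Icc (0:ℝ) 1) :
    betaKerBase x t ^ α = t ^ (α * x) * (1 - t) ^ (α * (1 - x)) := by
  have ht' : 0 ≤ 1 - t := sub_nonneg.2 ht.2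
  rw [betaKerBase, Real.mul_rpow (Real.rpow_nonneg ht.1 _) (Real.rpow_nonneg ht' _),
    ← Real.rpow_mul ht.1, ← Real.rpow_mul ht', mul_comm x, mul_comm (1 - x)]

theorem continuous_betaKerBase (hx : x ∈ Ioo (0:ℝ) 1) : Continuous (betaKerBase x) := by
  have hx' : 0 < 1 - x := sub_pos.2 hx.2
  unfold betaKerBase
  fun_prop (disch := first | exact hx.1.le | exact hx'.le)

theorem continuous_betaKerBase_rpow (hx : x ∈ Ioo (0:ℝ) 1) {α : ℝ} (hα : 0 ≤ α) :
    Continuous fun t => betaKerBase x t ^ α :=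
  (continuous_betaKerBase hx).rpow_const fun _ => Or.inr hα

theorem hasDerivAt_betaKerBase {t : ℝ} (ht : t ∈ Ioo (0:ℝ) 1) :
    HasDerivAt (betaKerBase x) (betaKerBase x t * ((x - t) / (t * (1 - t)))) t := by
  have ht0 : t ≠ 0 := ht.1.ne'
  have ht1 : 1 - t ≠ 0 := (sub_pos.2 ht.2).ne'
  have hlog : HasDerivAt (fun s => x * Real.log s + (1 - x) * Real.log (1 - s))
      (x * t⁻¹ + (1 - x) * (-1 / (1 - t))) t :=
    ((Real.hasDerivAt_log ht0).const_mul x).add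
      ((((hasDerivAt_id t).const_sub 1).log ht1).const_mul (1 - x))
  replace hlog := hlog.congr_deriv (show _ = (x - t) / (t * (1 - t)) by field_simp; ring)
  rw [betaKerBase_eq_exp ht]
  refine hlog.exp.congr_of_eventuallyEq ?_
  filter_upwards [isOpen_Ioo.mem_nhds ht] with s hs using betaKerBase_eq_exp hs

theorem strictMonoOn_betaKerBase (hx : x ∈ Ioo (0:ℝ) 1) :
    StrictMonoOn (betaKerBase x) (Icc 0 x) := by
  refine strictMonoOn_of_deriv_pos (convex_Icc 0 x) (continuous_betaKerBase hx).continuousOn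
    fun t ht => ?_
  rw [interior_Icc] at ht
  have ht' : t ∈ Ioo (0:ℝ) 1 := ⟨ht.1, ht.2.trans hx.2⟩
  rw [(hasDerivAt_betaKerBase ht').deriv]
  exact mul_pos (betaKerBase_pos ht')
    (div_pos (sub_pos.2 ht.2) (mul_pos ht.1 (sub_pos.2 ht'.2)))

theorem strictAntiOn_betaKerBase (hx : x ∈ Ioo (0:ℝ) 1) :
    StrictAntiOn (betaKerBase x) (Icc x 1) := by
  refine strictAntiOn_of_deriv_neg (convex_Icc x 1) (continuous_betaKerBase hx).continuousOn
    fun t ht => ?_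
  rw [interior_Icc] at ht
  have ht' : t ∈ Ioo (0:ℝ) 1 := ⟨hx.1.trans ht.1, ht.2⟩
  rw [(hasDerivAt_betaKerBase ht').deriv]
  exact mul_neg_of_pos_of_neg (betaKerBase_pos ht')
    (div_neg_of_neg_of_pos (sub_neg.2 ht.1) (mul_pos ht'.1 (sub_pos.2 ht'.2)))

variable {d : ℝ}

theorem betaKerBase_le_max_of_lt_abs_sub (hx : x ∈ Ioo (0:ℝ) 1) (hd : 0 ≤ d) (hdx : d ≤ x)
    (hdx' : d ≤ 1 - x) {t : ℝ} (ht : t ∈ Icc (0:ℝ) 1) (htd : d < |t - x|) :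
    betaKerBase x t ≤ max (betaKerBase x (x - d)) (betaKerBase x (x + d)) := by
  rcases lt_abs.1 htd with h | h
  · exact le_max_of_le_right ((strictAntiOn_betaKerBase hx).antitoneOn
      ⟨by linarith, by linarith⟩ ⟨by linarith, ht.2⟩ (by linarith))
  · exact le_max_of_le_left ((strictMonoOn_betaKerBase hx).monotoneOn
      ⟨ht.1, by linarith⟩ ⟨by linarith, by linarith⟩ (by linarith))

theorem exists_Icc_lt_betaKerBase (hx : x ∈ Ioo (0:ℝ) 1) (hd : 0 < d) (hdx : d ≤ x)
    (hdx' : d ≤ 1 - x) :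
    ∃ c u, max (betaKerBase x (x - d)) (betaKerBase x (x + d)) < c ∧ 0 ≤ u ∧ u + d / 2 ≤ 1 ∧
      ∀ t ∈ Icc u (u + d / 2), c ≤ betaKerBase x t := by
  have hl : betaKerBase x (x - d) < betaKerBase x (x - d / 2) :=
    strictMonoOn_betaKerBase hx ⟨by linarith, by linarith⟩ ⟨by linarith, by linarith⟩
      (by linarith)
  have hr : betaKerBase x (x + d) < betaKerBase x (x + d / 2) :=
    strictAntiOn_betaKerBase hx ⟨by linarith, by linarith⟩ ⟨by linarith, by linarith⟩
      (by linarith)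
  rcases le_total (betaKerBase x (x + d / 2)) (betaKerBase x (x - d / 2)) with h | h
  · refine ⟨_, x - d / 2, max_lt hl (hr.trans_le h), by linarith, by linarith, fun t ht => ?_⟩
    exact (strictMonoOn_betaKerBase hx).monotoneOn ⟨by linarith, by linarith⟩
      ⟨by linarith [ht.1], by linarith [ht.2]⟩ ht.1
  · refine ⟨_, x, max_lt (hl.trans_le h) hr, hx.1.le, by linarith, fun t ht => ?_⟩
    exact (strictAntiOn_betaKerBase hx).antitoneOn ⟨ht.1, by linarith [ht.2]⟩
      ⟨by linarith, by linarith⟩ ht.2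

end betaKerBase

section integrals

variable {x α : ℝ}

theorem betaFn_eq_integral_betaKerBase_rpow (hx : x ∈ Ioo (0:ℝ) 1) (hα : 0 ≤ α) :
    betaFn (α * x + 1) (α * (1 - x) + 1) = ∫ t in (0:ℝ)..1, betaKerBase x t ^ α := by
  rw [betaFn_add_one_eq_integral (by nlinarith [hx.1]) (by nlinarith [hx.2])]
  refine intervalIntegral.integral_congr fun t ht => ?_
  rw [uIcc_of_le zero_le_one] at ht
  exact (betaKerBase_rpow α ht).symm

theorem setIntegral_betaKerBase_rpow_le (hx : x ∈ Ioo (0:ℝ) 1) (hα : 0 ≤ α) {S : Set ℝ}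
    (hS : S ⊆ Icc 0 1) (hSm : MeasurableSet S) {a : ℝ} (ha0 : 0 ≤ a)
    (ha : ∀ t ∈ S, betaKerBase x t ≤ a) :
    ∫ t in S, betaKerBase x t ^ α ≤ a ^ α := by
  have hint : IntegrableOn (fun t => betaKerBase x t ^ α) S :=
    (continuous_betaKerBase_rpow hx hα).integrableOn_Icc.mono_set hS
  have hvol : volume.real S ≤ 1 :=
    (measureReal_mono hS measure_Icc_lt_top.ne).trans_eq (by simp)
  calc ∫ t in S, betaKerBase x t ^ α ≤ ∫ _ in S, a ^ α :=
        setIntegral_mono_on hint (integrableOn_const (measure_mono hS |>.trans_lt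
          measure_Icc_lt_top).ne) hSm fun t ht =>
          Real.rpow_le_rpow (betaKerBase_nonneg (hS ht)) (ha t ht) hα
    _ = volume.real S * a ^ α := by rw [setIntegral_const, smul_eq_mul]
    _ ≤ a ^ α := mul_le_of_le_one_left (Real.rpow_nonneg ha0 α) hvol

theorem mul_rpow_le_integral_betaKerBase_rpow (hx : x ∈ Ioo (0:ℝ) 1) (hα : 0 ≤ α)
    {c u ℓ : ℝ} (hc0 : 0 ≤ c) (hu : 0 ≤ u) (hℓ : 0 ≤ ℓ) (huℓ : u + ℓ ≤ 1)
    (hc : ∀ t ∈ Icc u (u + ℓ), c ≤ betaKerBase x t) :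
    ℓ * c ^ α ≤ ∫ t in (0:ℝ)..1, betaKerBase x t ^ α := by
  have hcont := continuous_betaKerBase_rpow hx hα
  calc ℓ * c ^ α = ∫ _ in u..u + ℓ, c ^ α := by simp
    _ ≤ ∫ t in u..u + ℓ, betaKerBase x t ^ α :=
        intervalIntegral.integral_mono_on (by linarith) intervalIntegrable_const
          (hcont.intervalIntegrable _ _) fun t ht => Real.rpow_le_rpow hc0 (hc t ht) hα
    _ ≤ ∫ t in (0:ℝ)..1, betaKerBase x t ^ α := by
        refine intervalIntegral.integral_mono_interval hu (by linarith) huℓ ?_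
          (hcont.intervalIntegrable _ _)
        refine ae_restrict_of_forall_mem measurableSet_Ioc fun t ht => ?_
        exact Real.rpow_nonneg (betaKerBase_nonneg (Ioc_subset_Icc_self ht)) α

theorem setIntegral_betaKerR_le (hx : x ∈ Ioo (0:ℝ) 1) (hα : 0 ≤ α) {S : Set ℝ}
    (hS : S ⊆ Icc 0 1) (hSm : MeasurableSet S) {a c u ℓ : ℝ} (ha0 : 0 ≤ a)
    (ha : ∀ t ∈ S, betaKerBase x t ≤ a) (hc0 : 0 < c) (hu : 0 ≤ u) (hℓ : 0 < ℓ)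
    (huℓ : u + ℓ ≤ 1) (hc : ∀ t ∈ Icc u (u + ℓ), c ≤ betaKerBase x t) :
    ∫ t in S, betaKerR α x t ≤ (a / c) ^ α / ℓ := by
  have hden := mul_rpow_le_integral_betaKerBase_rpow hx hα hc0.le hu hℓ.le huℓ hc
  rw [← betaFn_eq_integral_betaKerBase_rpow hx hα] at hden
  have hcα : 0 < c ^ α := Real.rpow_pos_of_pos hc0 α
  calc ∫ t in S, betaKerR α x t
        = (∫ t in S, betaKerBase x t ^ α) / betaFn (α * x + 1) (α * (1 - x) + 1) := by
        rw [← integral_div]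
        refine setIntegral_congr_fun hSm fun t ht => ?_
        rw [betaKerR, betaKerBase_rpow α (hS ht)]
    _ ≤ a ^ α / (ℓ * c ^ α) :=
        div_le_div₀ (Real.rpow_nonneg ha0 α)
          (setIntegral_betaKerBase_rpow_le hx hα hS hSm ha0 ha) (mul_pos hℓ hcα) hden
    _ = (a / c) ^ α / ℓ := by
        rw [Real.div_rpow ha0 hc0.le]
        field_simp

end integrals

theorem eventually_mul_rpow_le_rpow (C : ℝ) {r B : ℝ} (hr : 0 ≤ r) (hrB : r < B) :
    ∀ᶠ α : ℝ in atTop, C * r ^ α ≤ B ^ α := by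
  have hB : 0 < B := hr.trans_lt hrB
  have h : Tendsto (fun α : ℝ => C * (r / B) ^ α) atTop (𝓝 0) := by
    have := (tendsto_rpow_atTop_of_base_lt_one _ (by linarith [div_nonneg hr hB.le])
      ((div_lt_one hB).2 hrB)).const_mul C
    rwa [mul_zero] at this
  filter_upwards [h.eventually (ge_mem_nhds one_pos)] with α hα
  calc C * r ^ α = C * (r / B) ^ α * B ^ α := by
        rw [Real.div_rpow hr hB.le]
        field_simp [(Real.rpow_pos_of_pos hB α).ne']
    _ ≤ 1 * B ^ α := by gcongr
    _ = B ^ α := one_mul _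

theorem one_le_sqrt_add_two_div {x α : ℝ} (hx : x ∈ Ioo (0:ℝ) 1) (hα : 0 ≤ α) :
    1 ≤ Real.sqrt ((α + 2) / (2 * Real.pi * x * (1 - x))) := by
  have hx' : 0 < 1 - x := sub_pos.2 hx.2
  have hden : 0 < 2 * Real.pi * x * (1 - x) := by have := hx.1; positivity
  have hquarter : x * (1 - x) ≤ 1 / 4 := by nlinarith [sq_nonneg (x - 1 / 2)]
  rw [Real.one_le_sqrt, one_le_div hden]
  nlinarith [Real.pi_le_four, Real.pi_pos, mul_pos hx.1 hx']

theorem stmt_4 (x d : ℝ) (hx : x ∈ Set.Ioo (0:ℝ) 1) (hd : 0 < d)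
    (hd' : d < min x (1 - x) / 2) :
    ∃ B : ℝ, B < 1 ∧ ∃ α₀ : ℝ, ∀ α : ℝ, α₀ ≤ α →
      (∫ t in {t : ℝ | t ∈ Set.Icc (0:ℝ) 1 ∧ |t - x| > d}, betaKerR α x t) ≤
        B ^ α * Real.sqrt ((α + 2) / (2 * Real.pi * x * (1 - x))) := by
  have hdx : d ≤ x := by linarith [min_le_left x (1 - x)]
  have hdx' : d ≤ 1 - x := by linarith [min_le_right x (1 - x)]
  obtain ⟨c, u, hac, hu0, hu1, hc⟩ := exists_Icc_lt_betaKerBase hx hd hdx hdx'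
  set a := max (betaKerBase x (x - d)) (betaKerBase x (x + d))
  have ha0 : 0 ≤ a := le_max_of_le_left (betaKerBase_nonneg ⟨by linarith, by linarith⟩)
  have hc0 : 0 < c := ha0.trans_lt hac
  obtain ⟨B, hrB, hB1⟩ := exists_between ((div_lt_one hc0).2 hac)
  refine ⟨B, hB1, ?_⟩
  obtain ⟨α₀, hα₀⟩ := ((eventually_mul_rpow_le_rpow (2 / d) (div_nonneg ha0 hc0.le) hrB).and
    (eventually_ge_atTop 0)).exists_forall_of_atTop
  refine ⟨α₀, fun α hα => ?_⟩
  obtain ⟨hratio, hα0⟩ := hα₀ α hα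
  have hSm : MeasurableSet {t : ℝ | t ∈ Set.Icc (0:ℝ) 1 ∧ |t - x| > d} :=
    measurableSet_Icc.inter
      (measurableSet_lt measurable_const (by fun_prop : Measurable fun t : ℝ => |t - x|))
  calc _ ≤ (a / c) ^ α / (d / 2) :=
        setIntegral_betaKerR_le hx hα0 (fun t ht => ht.1) hSm ha0
          (fun t ht => betaKerBase_le_max_of_lt_abs_sub hx hd.le hdx hdx' ht.1 ht.2)
          hc0 hu0 (half_pos hd) hu1 hc
    _ = 2 / d * (a / c) ^ α := by ring
    _ ≤ B ^ α := hratio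
    _ ≤ _ := le_mul_of_one_le_right (Real.rpow_nonneg ((div_nonneg ha0 hc0.le).trans hrB.le) α)
        (one_le_sqrt_add_two_div hx hα0)
end

section
/- For fixed x ∈ (0,1), the Beta function satisfies the asymptotic B(αx+1, α(1−x)+1) ~ √(2π x (1−x)/α) · x^{αx} (1−x)^{α(1−x)} as α → ∞; that is, lim_{α→∞} B(αx+1, α(1−x)+1) · √(α/(2π x (1−x))) · x^{−αx} (1−x)^{−α(1−x)} = 1. -/
open Filter Real Set Topology Asymptotics

theorem Real.Gamma_add_le_Gamma_mul_rpow {t s : ℝ} (ht : 0 < t) (hs₀ : 0 ≤ s) (hs₁ : s ≤ 1) :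
    Gamma (t + s) ≤ Gamma t * t ^ s := by
  have hΓ := Gamma_pos_of_pos ht
  have hconv := convexOn_log_Gamma.2 (mem_Ioi.2 ht) (mem_Ioi.2 (by linarith : 0 < t + 1))
    (sub_nonneg.2 hs₁) hs₀ (by ring)
  have harg : (1 - s) * t + s * (t + 1) = t + s := by ring
  simp only [Function.comp, smul_eq_mul, harg, Gamma_add_one ht.ne', log_mul ht.ne' hΓ.ne']
    at hconv
  rw [← log_le_log_iff (Gamma_pos_of_pos (by linarith)) (by positivity),
    log_mul hΓ.ne' (by positivity), log_rpow ht]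
  linarith

theorem Real.mul_Gamma_mul_rpow_le_Gamma_add {t s : ℝ} (ht : 0 < t) (hs₀ : 0 ≤ s) (hs₁ : s ≤ 1) :
    t * (Gamma t * t ^ s) ≤ (t + s) * Gamma (t + s) := by
  have hts : 0 < t + s := by linarith
  have h := Gamma_add_le_Gamma_mul_rpow hts (sub_nonneg.2 hs₁) (by linarith)
  rw [add_add_sub_cancel, Gamma_add_one ht.ne'] at h
  calc t * (Gamma t * t ^ s) ≤ Gamma (t + s) * (t + s) ^ (1 - s) * (t + s) ^ s := by
        rw [← mul_assoc]
        gcongr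
        linarith
    _ = (t + s) * Gamma (t + s) := by
        rw [mul_assoc, ← rpow_add hts, sub_add_cancel, rpow_one, mul_comm]

theorem Real.exp_neg_inv_le_exp_sub_mul_div_rpow {n t : ℝ} (hn : 0 < n) (hnt : n ≤ t)
    (htn : t ≤ n + 1) : exp (-n⁻¹) ≤ exp (t - n) * (n / t) ^ t := by
  have ht : 0 < t := hn.trans_le hnt
  have hlog : t * (1 - t / n) ≤ t * log (n / t) := by
    refine mul_le_mul_of_nonneg_left ?_ ht.le
    simpa only [inv_div] using one_sub_inv_le_log_of_pos (div_pos hn ht)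
  have hquad : -n⁻¹ ≤ (t - n) + t * (1 - t / n) := by
    rw [show (t - n) + t * (1 - t / n) = -((t - n) * (t - n) / n) by field_simp; ring,
      neg_le_neg_iff, inv_eq_one_div]
    gcongr
    nlinarith
  rw [← exp_log (rpow_pos_of_pos (div_pos hn ht) t), log_rpow (div_pos hn ht), ← exp_add,
    exp_le_exp]
  linarith

theorem Real.exp_sub_mul_div_rpow_le_one {n t : ℝ} (hn : 0 < n) (hnt : n ≤ t) :
    exp (t - n) * (n / t) ^ t ≤ 1 := by
  have ht : 0 < t := hn.trans_le hnt
  have hlog : t * log (n / t) ≤ t * (n / t - 1) :=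
    mul_le_mul_of_nonneg_left (log_le_sub_one_of_pos (div_pos hn ht)) ht.le
  have hlin : t * (n / t - 1) = n - t := by field_simp
  rw [← exp_log (rpow_pos_of_pos (div_pos hn ht) t), log_rpow (div_pos hn ht), ← exp_add,
    exp_le_one_iff]
  linarith

noncomputable def stirlingApprox (t : ℝ) : ℝ :=
  √(2 * t * π) * (t / exp 1) ^ t

lemma stirlingApprox_natCast (n : ℕ) :
    stirlingApprox n = √(2 * n * π) * (n / exp 1) ^ n := by
  rw [stirlingApprox, rpow_natCast]

lemma Gamma_add_one_div_stirlingApprox_eq {n t : ℝ} (hn : 0 < n) (hnt : n ≤ t) :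
    Gamma (t + 1) / stirlingApprox t =
      Gamma (n + 1) / stirlingApprox n * √(t / n) * (Gamma t / (Gamma n * n ^ (t - n))) *
        (exp (t - n) * (n / t) ^ t) := by
  have ht : 0 < t := hn.trans_le hnt
  have := Gamma_pos_of_pos hn
  have := Gamma_pos_of_pos ht
  rw [Gamma_add_one ht.ne', Gamma_add_one hn.ne', stirlingApprox, stirlingApprox,
    div_rpow ht.le (exp_pos 1).le, div_rpow hn.le (exp_pos 1).le, exp_one_rpow, exp_one_rpow,
    div_rpow hn.le ht.le, rpow_sub hn, exp_sub, sqrt_div' _ hn.le,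
    show 2 * t * π = t * (2 * π) by ring, show 2 * n * π = n * (2 * π) by ring,
    sqrt_mul ht.le, sqrt_mul hn.le]
  have := sqrt_pos.2 ht
  have := sqrt_pos.2 hn
  have : 0 < n ^ n := rpow_pos_of_pos hn n
  have : 0 < t ^ t := rpow_pos_of_pos ht t
  have : 0 < n ^ t := rpow_pos_of_pos hn t
  field_simp
  rw [sq_sqrt hn.le, sq_sqrt ht.le, mul_comm]

lemma tendsto_Gamma_floor_add_one_div_stirlingApprox :
    Tendsto (fun t : ℝ => Gamma (⌊t⌋₊ + 1) / stirlingApprox ⌊t⌋₊) atTop (𝓝 1) := by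
  have hne : ∀ᶠ n : ℕ in atTop, √(2 * n * π) * (n / exp 1) ^ n ≠ 0 := by
    filter_upwards [eventually_gt_atTop 0] with n hn
    positivity
  have h := ((isEquivalent_iff_tendsto_one hne).1 Stirling.factorial_isEquivalent_stirling).comp
    (tendsto_nat_floor_atTop (α := ℝ))
  simpa only [Function.comp_def, Pi.div_apply, stirlingApprox_natCast, Gamma_nat_eq_factorial]
    using h

lemma tendsto_Gamma_div_Gamma_floor_mul_rpow :
    Tendsto (fun t : ℝ => Gamma t / (Gamma ⌊t⌋₊ * (⌊t⌋₊ : ℝ) ^ (t - ⌊t⌋₊))) atTop (𝓝 1) := by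
  refine tendsto_of_tendsto_of_tendsto_of_le_of_le' (tendsto_nat_floor_div_atTop (R := ℝ))
    tendsto_const_nhds ?_ ?_ <;> filter_upwards [eventually_ge_atTop 1] with t ht
  all_goals
    have hn : (0 : ℝ) < ⌊t⌋₊ := by exact_mod_cast Nat.floor_pos.2 ht
    have hs₀ : 0 ≤ t - ⌊t⌋₊ := sub_nonneg.2 (Nat.floor_le (by linarith))
    have hs₁ : t - ⌊t⌋₊ ≤ 1 := by linarith [Nat.lt_floor_add_one t]
    have hpos : 0 < Gamma ⌊t⌋₊ * (⌊t⌋₊ : ℝ) ^ (t - ⌊t⌋₊) := by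
      have := Gamma_pos_of_pos hn
      positivity
  · rw [div_le_div_iff₀ (by linarith) hpos]
    simpa [mul_comm t] using mul_Gamma_mul_rpow_le_Gamma_add hn hs₀ hs₁
  · rw [div_le_one hpos]
    simpa using Gamma_add_le_Gamma_mul_rpow hn hs₀ hs₁

lemma tendsto_exp_sub_floor_mul_floor_div_rpow :
    Tendsto (fun t : ℝ => exp (t - ⌊t⌋₊) * (⌊t⌋₊ / t) ^ t) atTop (𝓝 1) := by
  have hlow : Tendsto (fun t : ℝ => exp (-(⌊t⌋₊ : ℝ)⁻¹)) atTop (𝓝 1) := by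
    have h := ((tendsto_natCast_atTop_atTop (R := ℝ)).comp
      (tendsto_nat_floor_atTop (α := ℝ))).inv_tendsto_atTop.neg
    simpa [Function.comp_def] using (continuous_exp.tendsto _).comp h
  refine tendsto_of_tendsto_of_tendsto_of_le_of_le' hlow tendsto_const_nhds ?_ ?_ <;>
    filter_upwards [eventually_ge_atTop 1] with t ht
  all_goals
    have hn : (0 : ℝ) < ⌊t⌋₊ := by exact_mod_cast Nat.floor_pos.2 ht
    have hnt : (⌊t⌋₊ : ℝ) ≤ t := Nat.floor_le (by linarith)
  · exact exp_neg_inv_le_exp_sub_mul_div_rpow hn hnt (Nat.lt_floor_add_one t).le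
  · exact exp_sub_mul_div_rpow_le_one hn hnt

theorem Real.Gamma_add_one_isEquivalent_stirlingApprox :
    (fun t => Gamma (t + 1)) ~[atTop] stirlingApprox := by
  refine isEquivalent_of_tendsto_one ?_
  have hsqrt : Tendsto (fun t : ℝ => √(t / ⌊t⌋₊)) atTop (𝓝 1) := by
    simpa using (tendsto_nat_floor_div_atTop.inv₀ one_ne_zero).sqrt
  have h := ((tendsto_Gamma_floor_add_one_div_stirlingApprox.mul hsqrt).mul
    tendsto_Gamma_div_Gamma_floor_mul_rpow).mul tendsto_exp_sub_floor_mul_floor_div_rpow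
  simp only [mul_one] at h
  refine h.congr' ?_
  filter_upwards [eventually_ge_atTop 1] with t ht
  exact (Gamma_add_one_div_stirlingApprox_eq (by exact_mod_cast Nat.floor_pos.2 ht)
    (Nat.floor_le (by linarith))).symm

lemma stirlingApprox_mul_stirlingApprox_div {α x : ℝ} (hα : 0 < α) (hx : x ∈ Ioo 0 1) :
    stirlingApprox (α * x) * stirlingApprox (α * (1 - x)) / stirlingApprox α =
      √(2 * π * α * x * (1 - x)) * x ^ (α * x) * (1 - x) ^ (α * (1 - x)) := by
  obtain ⟨hx₀, hx₁⟩ := hx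
  have hx₁' : 0 < 1 - x := sub_pos.2 hx₁
  have hc : 0 < α / exp 1 := by positivity
  have hsqrt : √(2 * (α * x) * π) * √(2 * (α * (1 - x)) * π) / √(2 * α * π) =
      √(2 * π * α * x * (1 - x)) := by
    rw [← sqrt_mul (by positivity), ← sqrt_div (by positivity)]
    congr 1
    field_simp
  have hpow : (α * x / exp 1) ^ (α * x) * (α * (1 - x) / exp 1) ^ (α * (1 - x)) =
      (α / exp 1) ^ α * (x ^ (α * x) * (1 - x) ^ (α * (1 - x))) := by
    rw [mul_div_right_comm, mul_div_right_comm α, mul_rpow hc.le hx₀.le,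
      mul_rpow hc.le hx₁'.le]
    rw [show (α / exp 1) ^ α = (α / exp 1) ^ (α * x) * (α / exp 1) ^ (α * (1 - x)) by
      rw [← rpow_add hc]; ring_nf]
    ring
  rw [stirlingApprox, stirlingApprox, stirlingApprox, ← hsqrt]
  field_simp
  rw [hpow]
  ring

theorem betaFn_isEquivalent {x : ℝ} (hx : x ∈ Ioo 0 1) :
    (fun α => betaFn (α * x + 1) (α * (1 - x) + 1)) ~[atTop]
      fun α => √(2 * π * x * (1 - x) / α) * x ^ (α * x) * (1 - x) ^ (α * (1 - x)) := by
  have hΓ := Gamma_add_one_isEquivalent_stirlingApprox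
  have h₁ := hΓ.comp_tendsto (tendsto_id.atTop_mul_const hx.1)
  have h₂ := hΓ.comp_tendsto (tendsto_id.atTop_mul_const (sub_pos.2 hx.2))
  have h₃ : (fun α : ℝ => α + 1) ~[atTop] id :=
    IsEquivalent.refl.add_const_of_norm_tendsto_atTop tendsto_norm_atTop_atTop
  refine (((h₁.mul h₂).div hΓ).div h₃).congr_left ?_ |>.congr_right ?_
  all_goals filter_upwards [eventually_gt_atTop 0] with α hα
  · simp only [betaFn, Function.comp_apply, Pi.mul_apply, Pi.div_apply, id]
    rw [show α * x + 1 + (α * (1 - x) + 1) = α + 1 + 1 by ring,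
      Gamma_add_one (s := α + 1) (by positivity), div_div, mul_comm (α + 1)]
  · simp only [Function.comp_apply, Pi.mul_apply, Pi.div_apply, id]
    rw [stirlingApprox_mul_stirlingApprox_div hα hx]
    have hsqrt : √(2 * π * α * x * (1 - x)) / α = √(2 * π * x * (1 - x) / α) := by
      rw [show 2 * π * α * x * (1 - x) = 2 * π * x * (1 - x) / α * α ^ 2 by field_simp,
        sqrt_mul' _ (sq_nonneg α), sqrt_sq hα.le, mul_div_assoc, div_self hα.ne', mul_one]
    rw [← hsqrt]
    ring

theorem stmt_5 (x : ℝ) (hx : x ∈ Set.Ioo (0:ℝ) 1) :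
    Tendsto (fun α : ℝ =>
        betaFn (α * x + 1) (α * (1 - x) + 1) *
          Real.sqrt (α / (2 * Real.pi * x * (1 - x))) *
          x ^ (-(α * x)) * (1 - x) ^ (-(α * (1 - x))))
      atTop (nhds 1) := by
  have hx₁ : 0 < 1 - x := sub_pos.2 hx.2
  have hne : ∀ᶠ α : ℝ in atTop,
      √(2 * π * x * (1 - x) / α) * x ^ (α * x) * (1 - x) ^ (α * (1 - x)) ≠ 0 := by
    filter_upwards [eventually_gt_atTop 0] with α hα
    have := hx.1
    positivity
  refine ((isEquivalent_iff_tendsto_one hne).1 (betaFn_isEquivalent hx)).congr' ?_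
  filter_upwards with α
  rw [Pi.div_apply, div_eq_mul_inv, mul_inv, mul_inv, ← sqrt_inv, inv_div,
    ← rpow_neg hx.1.le, ← rpow_neg hx₁.le]
  ring
end

section
/- Let G ⊆ [0,1]² be a closed convex set and f = 1_G. Define f_a(x,y) = ∫₀¹∫₀¹ β_α(t,x) β_{α′}(s,y) 1_G(t,s) dt ds for a = (α, α′) ∈ ℕ₊ × ℕ₊. Then f_a converges to f in L¹([0,1]²) as α, α′ → ∞; that is, ∫_{[0,1]²} |f_a(x,y) − f(x,y)| dx dy → 0. -/
/-!
For `x ∈ [0,1]`, `β_α(·, x)` is the density of the Beta(`⌊αx⌋ + 1`, `α − ⌊αx⌋ + 1`)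
distribution, with mean `(⌊αx⌋ + 1)/(α + 2)` and variance `O(1/α)`; its second moment about `x`
is at most `5/α`. By Chebyshev's inequality, `f_a(p) → 1_G(p)` at every point `p` of the square
near which `1_G` is constant, i.e. off the frontier of `G`. The frontier of a convex set is
Lebesgue-null and `|f_a − 1_G| ≤ 1`, so dominated convergence gives the `L¹` convergence.
-/

open MeasureTheory Filter

/-- Moment-recovered approximation of the indicator of `G`:
`f_a(x,y) = ∫₀¹∫₀¹ β_α(t,x) β_{α′}(s,y) 1_G(t,s) dt ds`. -/
noncomputable def indApprox (G : Set (ℝ × ℝ)) (α α' : ℕ) (x y : ℝ) : ℝ :=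
  ∫ t in (0:ℝ)..1, ∫ s in (0:ℝ)..1,
    betaKer α x t * betaKer α' y s * Set.indicator G (fun _ => (1:ℝ)) (t, s)


open Set Topology

local notation "□" => SProd.sprod (Set.Icc (0:ℝ) 1) (Set.Icc (0:ℝ) 1)

lemma betaFn_natCast_add_one (k n : ℕ) :
    betaFn (k + 1) (n + 1) = ∫ t in (0:ℝ)..1, t ^ k * (1 - t) ^ n := by
  have hB := ProbabilityTheory.beta_eq_betaIntegralReal (k + 1) (n + 1) (by positivity)
    (by positivity)
  have hcpow (t : ℝ) : (t : ℂ) ^ (((k + 1 : ℝ) : ℂ) - 1) * (1 - (t : ℂ)) ^ (((n + 1 : ℝ) : ℂ) - 1)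
      = ((t ^ k * (1 - t) ^ n : ℝ) : ℂ) := by
    push_cast
    rw [add_sub_cancel_right, add_sub_cancel_right, Complex.cpow_natCast, Complex.cpow_natCast]
  rw [show betaFn = ProbabilityTheory.beta from rfl, hB, Complex.betaIntegral]
  simp_rw [hcpow, intervalIntegral.integral_ofReal, Complex.ofReal_re]

lemma betaFn_pos {u v : ℝ} (hu : 0 < u) (hv : 0 < v) : 0 < betaFn u v :=
  ProbabilityTheory.beta_pos hu hv

lemma betaFn_add_one_left {u v : ℝ} (hu : 0 < u) (hv : 0 < v) :
    betaFn (u + 1) v = u / (u + v) * betaFn u v := by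
  have := Real.Gamma_pos_of_pos (add_pos hu hv)
  rw [betaFn, betaFn, Real.Gamma_add_one hu.ne', add_right_comm, Real.Gamma_add_one (by positivity)]
  field_simp

noncomputable def betaDensity (k n : ℕ) (t : ℝ) : ℝ :=
  t ^ k * (1 - t) ^ n / betaFn (k + 1) (n + 1)

lemma betaKer_eq_betaDensity (α : ℕ) (x : ℝ) :
    betaKer α x = betaDensity ⌊(α : ℝ) * x⌋₊ (α - ⌊(α : ℝ) * x⌋₊) :=
  rfl

lemma continuous_betaDensity (k n : ℕ) : Continuous (betaDensity k n) := by
  unfold betaDensity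
  fun_prop

lemma betaDensity_nonneg (k n : ℕ) {t : ℝ} (ht : t ∈ Icc 0 1) : 0 ≤ betaDensity k n t :=
  div_nonneg (mul_nonneg (pow_nonneg ht.1 k) (pow_nonneg (sub_nonneg.2 ht.2) n))
    (betaFn_pos (by positivity) (by positivity)).le

lemma integral_pow_mul_betaDensity (k n j : ℕ) :
    ∫ t in (0:ℝ)..1, t ^ j * betaDensity k n t
      = betaFn ((k + j : ℕ) + 1) (n + 1) / betaFn (k + 1) (n + 1) := by
  simp_rw [betaDensity, mul_div_assoc', ← mul_assoc, ← pow_add, add_comm j k]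
  rw [intervalIntegral.integral_div, betaFn_natCast_add_one (k + j), betaFn_natCast_add_one]

lemma integral_betaDensity (k n : ℕ) : ∫ t in (0:ℝ)..1, betaDensity k n t = 1 := by
  simpa [(betaFn_pos (u := k + 1) (v := n + 1) (by positivity) (by positivity)).ne']
    using integral_pow_mul_betaDensity k n 0

lemma integral_mul_betaDensity (k n : ℕ) :
    ∫ t in (0:ℝ)..1, t * betaDensity k n t = (k + 1) / (k + n + 2) := by
  have hB := betaFn_pos (u := k + 1) (v := n + 1) (by positivity) (by positivity)
  have h := integral_pow_mul_betaDensity k n 1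
  simp only [pow_one] at h
  rw [h]
  push_cast
  rw [betaFn_add_one_left (by positivity) (by positivity)]
  field_simp
  ring

lemma integral_sq_mul_betaDensity (k n : ℕ) :
    ∫ t in (0:ℝ)..1, t ^ 2 * betaDensity k n t
      = (k + 1) * (k + 2) / ((k + n + 2) * (k + n + 3)) := by
  have hB := betaFn_pos (u := k + 1) (v := n + 1) (by positivity) (by positivity)
  rw [integral_pow_mul_betaDensity]
  push_cast
  rw [show (k : ℝ) + 2 + 1 = (k + 1) + 1 + 1 by ring,
    betaFn_add_one_left (by positivity) (by positivity),
    betaFn_add_one_left (by positivity) (by positivity)]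
  field_simp
  ring

lemma integral_betaDensity_mul_sub_sq (k n : ℕ) (x : ℝ) :
    ∫ t in (0:ℝ)..1, betaDensity k n t * (t - x) ^ 2
      = (k + 1) * (n + 1) / ((k + n + 2) ^ 2 * (k + n + 3)) + ((k + 1) / (k + n + 2) - x) ^ 2 := by
  have hd := continuous_betaDensity k n
  have hexpand (t : ℝ) : betaDensity k n t * (t - x) ^ 2
      = t ^ 2 * betaDensity k n t - 2 * x * (t * betaDensity k n t)
          + x ^ 2 * betaDensity k n t := by
    ring
  simp_rw [hexpand]
  rw [intervalIntegral.integral_add (by apply Continuous.intervalIntegrable; fun_prop)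
      (by apply Continuous.intervalIntegrable; fun_prop),
    intervalIntegral.integral_sub (by apply Continuous.intervalIntegrable; fun_prop)
      (by apply Continuous.intervalIntegrable; fun_prop),
    intervalIntegral.integral_const_mul, intervalIntegral.integral_const_mul,
    integral_sq_mul_betaDensity, integral_mul_betaDensity, integral_betaDensity]
  field_simp
  ring

lemma continuous_betaKer (α : ℕ) (x : ℝ) : Continuous (betaKer α x) :=
  continuous_betaDensity _ _

lemma betaKer_nonneg (α : ℕ) (x : ℝ) {t : ℝ} (ht : t ∈ Icc 0 1) : 0 ≤ betaKer α x t :=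
  betaDensity_nonneg _ _ ht

lemma integral_betaKer (α : ℕ) (x : ℝ) : ∫ t in (0:ℝ)..1, betaKer α x t = 1 :=
  integral_betaDensity _ _

lemma integral_betaKer_mul_sub_sq_le {α : ℕ} (hα : 0 < α) {x : ℝ} (hx : x ∈ Icc 0 1) :
    ∫ t in (0:ℝ)..1, betaKer α x t * (t - x) ^ 2 ≤ 5 / α := by
  rw [betaKer_eq_betaDensity, integral_betaDensity_mul_sub_sq]
  set k := ⌊(α : ℝ) * x⌋₊
  have hA : (1 : ℝ) ≤ α := Nat.one_le_cast.2 hα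
  have hk_le : (k : ℝ) ≤ α * x := Nat.floor_le (by nlinarith [hx.1])
  have hk_gt : (α : ℝ) * x < k + 1 := Nat.lt_floor_add_one _
  have hkα : k ≤ α := Nat.floor_le_of_le (by nlinarith [hx.2])
  rw [Nat.cast_sub hkα, add_sub_cancel]
  have hvar : (k + 1) * (α - k + 1) / ((α + 2) ^ 2 * (α + 3)) ≤ (1 : ℝ) / α := by
    rw [div_le_div_iff₀ (by positivity) (by positivity)]
    nlinarith [sq_nonneg ((α : ℝ) - 2 * k)]
  have hbias : ((k + 1) / (α + 2) - x) ^ 2 ≤ (4 : ℝ) / α := by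
    rw [div_sub' (by positivity), div_pow, div_le_div_iff₀ (by positivity) (by positivity)]
    have hu : (k + 1 - (α + 2) * x) ^ 2 ≤ (2 : ℝ) ^ 2 :=
      sq_le_sq' (by nlinarith [hx.2]) (by nlinarith [hx.1])
    nlinarith [mul_le_mul_of_nonneg_right hu (Nat.cast_nonneg (α := ℝ) α)]
  linarith [show (5 : ℝ) / α = 1 / α + 4 / α by ring]

lemma abs_integral_mul_sub_le {X : Type*} [MeasurableSpace X] {μ : Measure X} {w h Φ : X → ℝ}
    {c : ℝ} (hw : Integrable w μ) (hwh : Integrable (fun x => w x * h x) μ)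
    (hwΦ : Integrable (fun x => w x * Φ x) μ) (hw0 : 0 ≤ᵐ[μ] w) (hw1 : ∫ x, w x ∂μ = 1)
    (hΦ : ∀ x, |h x - c| ≤ Φ x) :
    |∫ x, w x * h x ∂μ - c| ≤ ∫ x, w x * Φ x ∂μ := by
  have hsub : Integrable (fun x => w x * h x - w x * c) μ := hwh.sub (hw.mul_const c)
  calc |∫ x, w x * h x ∂μ - c| = |∫ x, (w x * h x - w x * c) ∂μ| := by
        rw [integral_sub hwh (hw.mul_const c), integral_mul_const, hw1, one_mul]
    _ ≤ ∫ x, |w x * h x - w x * c| ∂μ := abs_integral_le_integral_abs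
    _ ≤ ∫ x, w x * Φ x ∂μ := by
        refine integral_mono_ae hsub.abs hwΦ ?_
        filter_upwards [hw0] with x hx
        rw [← mul_sub, abs_mul, abs_of_nonneg hx]
        exact mul_le_mul_of_nonneg_left (hΦ x) hx

-- `Metric.ball` on `ℝ × ℝ` is for the sup distance: off the ball one coordinate is `δ`-far.
lemma abs_sub_le_of_eqOn_ball {h : ℝ × ℝ → ℝ} {p : ℝ × ℝ} {δ : ℝ} (hδ : 0 < δ)
    (h1 : ∀ q, |h q - h p| ≤ 1) (hloc : ∀ q ∈ Metric.ball p δ, h q = h p) (q : ℝ × ℝ) :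
    |h q - h p| ≤ ((q.1 - p.1) ^ 2 + (q.2 - p.2) ^ 2) / δ ^ 2 := by
  by_cases hq : q ∈ Metric.ball p δ
  · rw [hloc q hq, sub_self, abs_zero]
    positivity
  · rw [Metric.mem_ball, not_lt, Prod.dist_eq, Real.dist_eq, Real.dist_eq, le_max_iff] at hq
    have hsq : δ ^ 2 ≤ (q.1 - p.1) ^ 2 + (q.2 - p.2) ^ 2 := by
      rcases hq with hq | hq
      · nlinarith [sq_abs (q.1 - p.1), sq_nonneg (q.2 - p.2)]
      · nlinarith [sq_abs (q.2 - p.2), sq_nonneg (q.1 - p.1)]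
    exact (h1 q).trans ((one_le_div (by positivity)).2 hsq)

lemma isCompact_unitSquare : IsCompact □ :=
  isCompact_Icc.prod isCompact_Icc

lemma Continuous.integrableOn_unitSquare {F : ℝ × ℝ → ℝ} (hF : Continuous F) :
    IntegrableOn F □ :=
  hF.continuousOn.integrableOn_compact isCompact_unitSquare

lemma setIntegral_unitSquare_mul (f g : ℝ → ℝ) :
    ∫ q in □, f q.1 * g q.2
      = (∫ t in (0:ℝ)..1, f t) * ∫ s in (0:ℝ)..1, g s := by
  rw [Measure.volume_eq_prod, ← Measure.prod_restrict, integral_prod_mul,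
    intervalIntegral.integral_of_le zero_le_one, intervalIntegral.integral_of_le zero_le_one,
    integral_Icc_eq_integral_Ioc, integral_Icc_eq_integral_Ioc]

lemma intervalIntegral_intervalIntegral_eq_setIntegral_unitSquare {F : ℝ × ℝ → ℝ}
    (hF : IntegrableOn F □) :
    ∫ t in (0:ℝ)..1, ∫ s in (0:ℝ)..1, F (t, s) = ∫ q in □, F q := by
  rw [IntegrableOn, Measure.volume_eq_prod, ← Measure.prod_restrict] at hF
  simp_rw [intervalIntegral.integral_of_le zero_le_one, ← integral_Icc_eq_integral_Ioc]
  rw [Measure.volume_eq_prod, ← Measure.prod_restrict, integral_prod _ hF]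

lemma integrableOn_unitSquare_mul_mul {f g : ℝ → ℝ} {h : ℝ × ℝ → ℝ} {C : ℝ} (hf : Continuous f)
    (hg : Continuous g) (hh : AEStronglyMeasurable h (volume.restrict □)) (hhC : ∀ q, |h q| ≤ C) :
    IntegrableOn (fun q : ℝ × ℝ => f q.1 * g q.2 * h q) □ :=
  Integrable.mul_bdd (hf.fst'.mul hg.snd').integrableOn_unitSquare hh (Eventually.of_forall hhC)

lemma abs_setIntegral_unitSquare_mul_mul_sub_le {f g : ℝ → ℝ} {h Φ : ℝ × ℝ → ℝ} {p : ℝ × ℝ}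
    {C : ℝ} (hf : Continuous f) (hg : Continuous g) (hf0 : ∀ t ∈ Icc (0:ℝ) 1, 0 ≤ f t)
    (hg0 : ∀ s ∈ Icc (0:ℝ) 1, 0 ≤ g s) (hf1 : ∫ t in (0:ℝ)..1, f t = 1)
    (hg1 : ∫ s in (0:ℝ)..1, g s = 1) (hh : Measurable h) (hhC : ∀ q, |h q| ≤ C)
    (hΦ : Continuous Φ) (hhΦ : ∀ q, |h q - h p| ≤ Φ q) :
    |(∫ q in □, f q.1 * g q.2 * h q) - h p| ≤ ∫ q in □, f q.1 * g q.2 * Φ q := by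
  refine abs_integral_mul_sub_le (hf.fst'.mul hg.snd').integrableOn_unitSquare
    (integrableOn_unitSquare_mul_mul hf hg hh.aestronglyMeasurable hhC)
    ((hf.fst'.mul hg.snd').mul hΦ).integrableOn_unitSquare
    ?_ (by rw [setIntegral_unitSquare_mul, hf1, hg1, one_mul]) hhΦ
  filter_upwards [ae_restrict_mem isCompact_unitSquare.measurableSet] with q hq
  exact mul_nonneg (hf0 _ hq.1) (hg0 _ hq.2)

lemma setIntegral_unitSquare_mul_mul_sq_add_sq {f g : ℝ → ℝ} (hf : Continuous f)
    (hg : Continuous g) (hf1 : ∫ t in (0:ℝ)..1, f t = 1) (hg1 : ∫ s in (0:ℝ)..1, g s = 1)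
    (p : ℝ × ℝ) (δ : ℝ) :
    ∫ q in □, f q.1 * g q.2 * (((q.1 - p.1) ^ 2 + (q.2 - p.2) ^ 2) / δ ^ 2)
      = ((∫ t in (0:ℝ)..1, f t * (t - p.1) ^ 2) + ∫ s in (0:ℝ)..1, g s * (s - p.2) ^ 2)
          / δ ^ 2 := by
  have hsplit (q : ℝ × ℝ) : f q.1 * g q.2 * (((q.1 - p.1) ^ 2 + (q.2 - p.2) ^ 2) / δ ^ 2)
      = (f q.1 * (q.1 - p.1) ^ 2 * g q.2 + f q.1 * (g q.2 * (q.2 - p.2) ^ 2)) / δ ^ 2 := by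
    ring
  simp_rw [hsplit]
  rw [integral_div, integral_add (Continuous.integrableOn_unitSquare (by fun_prop))
      (Continuous.integrableOn_unitSquare (by fun_prop)),
    setIntegral_unitSquare_mul (fun t => f t * (t - p.1) ^ 2) g,
    setIntegral_unitSquare_mul f (fun s => g s * (s - p.2) ^ 2), hf1, hg1, mul_one, one_mul]

lemma abs_indicator_one_le {X : Type*} (s : Set X) (q : X) :
    |s.indicator (fun _ => (1:ℝ)) q| ≤ 1 := by
  by_cases hq : q ∈ s <;> simp [hq]

lemma abs_indicator_one_sub_le {X : Type*} (s : Set X) (q p : X) :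
    |s.indicator (fun _ => (1:ℝ)) q - s.indicator (fun _ => (1:ℝ)) p| ≤ 1 := by
  by_cases hq : q ∈ s <;> by_cases hp : p ∈ s <;> simp [hq, hp]

lemma eventually_indicator_eq_of_notMem_frontier {X M : Type*} [TopologicalSpace X] [Zero M]
    {s : Set X} (c : M) {p : X} (hp : p ∉ frontier s) :
    ∀ᶠ q in 𝓝 p, s.indicator (fun _ => c) q = s.indicator (fun _ => c) p := by
  rw [← mem_compl_iff, compl_frontier_eq_union_interior] at hp
  rcases hp with hp | hp
  · filter_upwards [isOpen_interior.mem_nhds hp] with q hq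
    rw [indicator_of_mem (interior_subset hq), indicator_of_mem (interior_subset hp)]
  · filter_upwards [isOpen_interior.mem_nhds hp] with q hq
    rw [indicator_of_notMem (interior_subset hq), indicator_of_notMem (interior_subset hp)]

section indApprox

variable {G : Set (ℝ × ℝ)}

lemma indApprox_eq_setIntegral (hG : MeasurableSet G) (α α' : ℕ) (x y : ℝ) :
    indApprox G α α' x y
      = ∫ q in □, betaKer α x q.1 * betaKer α' y q.2 * G.indicator (fun _ => (1:ℝ)) q :=
  intervalIntegral_intervalIntegral_eq_setIntegral_unitSquare
    (F := fun q => betaKer α x q.1 * betaKer α' y q.2 * G.indicator (fun _ => (1:ℝ)) q)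
    (integrableOn_unitSquare_mul_mul (continuous_betaKer α x) (continuous_betaKer α' y)
      (measurable_const.indicator hG).aestronglyMeasurable (abs_indicator_one_le G))

lemma abs_indApprox_sub_indicator_le_one (hG : MeasurableSet G) (α α' : ℕ) (p : ℝ × ℝ) :
    |indApprox G α α' p.1 p.2 - G.indicator (fun _ => (1:ℝ)) p| ≤ 1 := by
  rw [indApprox_eq_setIntegral hG]
  convert abs_setIntegral_unitSquare_mul_mul_sub_le (continuous_betaKer α p.1)
    (continuous_betaKer α' p.2) (fun t => betaKer_nonneg α p.1) (fun s => betaKer_nonneg α' p.2)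
    (integral_betaKer α p.1) (integral_betaKer α' p.2) (measurable_const.indicator hG)
    (abs_indicator_one_le G) continuous_const (fun q => abs_indicator_one_sub_le G q p)
  simp_rw [mul_one]
  rw [setIntegral_unitSquare_mul, integral_betaKer, integral_betaKer, mul_one]

lemma abs_indApprox_sub_indicator_le (hG : MeasurableSet G) {α α' : ℕ} (hα : 0 < α)
    (hα' : 0 < α') {p : ℝ × ℝ} (hp : p ∈ □) {δ : ℝ} (hδ : 0 < δ)
    (hloc : ∀ q ∈ Metric.ball p δ,
      G.indicator (fun _ => (1:ℝ)) q = G.indicator (fun _ => (1:ℝ)) p) :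
    |indApprox G α α' p.1 p.2 - G.indicator (fun _ => (1:ℝ)) p| ≤ (5 / α + 5 / α') / δ ^ 2 := by
  rw [indApprox_eq_setIntegral hG]
  refine (abs_setIntegral_unitSquare_mul_mul_sub_le (continuous_betaKer α p.1)
    (continuous_betaKer α' p.2) (fun t => betaKer_nonneg α p.1) (fun s => betaKer_nonneg α' p.2)
    (integral_betaKer α p.1) (integral_betaKer α' p.2) (measurable_const.indicator hG)
    (abs_indicator_one_le G) (by fun_prop)
    (abs_sub_le_of_eqOn_ball hδ (fun q => abs_indicator_one_sub_le G q p) hloc)).trans ?_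
  rw [setIntegral_unitSquare_mul_mul_sq_add_sq (continuous_betaKer α p.1)
    (continuous_betaKer α' p.2) (integral_betaKer α p.1) (integral_betaKer α' p.2)]
  gcongr
  · exact integral_betaKer_mul_sub_sq_le hα hp.1
  · exact integral_betaKer_mul_sub_sq_le hα' hp.2

lemma measurable_indApprox (G : Set (ℝ × ℝ)) (α α' : ℕ) :
    Measurable fun p : ℝ × ℝ => indApprox G α α' p.1 p.2 := by
  have hfactor : (fun p : ℝ × ℝ => indApprox G α α' p.1 p.2)
      = (fun k : ℕ × ℕ => ∫ t in (0:ℝ)..1, ∫ s in (0:ℝ)..1,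
          betaDensity k.1 (α - k.1) t * betaDensity k.2 (α' - k.2) s
            * G.indicator (fun _ => (1:ℝ)) (t, s))
        ∘ fun p : ℝ × ℝ => (⌊(α : ℝ) * p.1⌋₊, ⌊(α' : ℝ) * p.2⌋₊) :=
    rfl
  rw [hfactor]
  exact (measurable_of_countable _).comp
    ((measurable_const.mul measurable_fst).nat_floor.prodMk
      (measurable_const.mul measurable_snd).nat_floor)

lemma tendsto_indApprox_of_notMem_frontier (hG : MeasurableSet G) {p : ℝ × ℝ} (hp : p ∈ □)
    (hpG : p ∉ frontier G) :
    Tendsto (fun a : ℕ × ℕ => indApprox G a.1 a.2 p.1 p.2) atTop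
      (𝓝 (G.indicator (fun _ => (1:ℝ)) p)) := by
  obtain ⟨δ, hδ, hloc⟩ :=
    Metric.eventually_nhds_iff_ball.1 (eventually_indicator_eq_of_notMem_frontier (1 : ℝ) hpG)
  have hbound : Tendsto (fun a : ℕ × ℕ => (5 / (a.1 : ℝ) + 5 / a.2) / δ ^ 2) atTop (𝓝 0) := by
    rw [← prod_atTop_atTop_eq]
    simpa using (((tendsto_const_div_atTop_nhds_zero_nat 5).comp tendsto_fst).add
      ((tendsto_const_div_atTop_nhds_zero_nat 5).comp tendsto_snd)).div_const (δ ^ 2)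
  rw [tendsto_iff_norm_sub_tendsto_zero]
  refine squeeze_zero' (Eventually.of_forall fun a => norm_nonneg _) ?_ hbound
  filter_upwards [eventually_ge_atTop (1, 1)] with a ha
  exact abs_indApprox_sub_indicator_le hG ha.1 ha.2 hp hδ hloc

end indApprox

theorem stmt_8_general (G : Set (ℝ × ℝ)) (hGcl : IsClosed G) (hGcv : Convex ℝ G) :
    Tendsto (fun a : ℕ × ℕ =>
        ∫ p in Set.Icc (0:ℝ) 1 ×ˢ Set.Icc (0:ℝ) 1,
          |indApprox G a.1 a.2 p.1 p.2 - Set.indicator G (fun _ => (1:ℝ)) p|)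
      atTop (nhds 0) := by
  have hG := hGcl.measurableSet
  have hfrontier : ∀ᵐ p, p ∉ frontier G :=
    measure_eq_zero_iff_ae_notMem.1 (hGcv.addHaar_frontier volume)
  suffices Tendsto (fun a : ℕ × ℕ => ∫ p in □,
      |indApprox G a.1 a.2 p.1 p.2 - G.indicator (fun _ => (1:ℝ)) p|) atTop
      (𝓝 (∫ _ in □, (0:ℝ))) by simpa using this
  refine tendsto_integral_filter_of_dominated_convergence (fun _ => 1) ?_ ?_ ?_ ?_
  · exact Eventually.of_forall fun a => ((measurable_indApprox G a.1 a.2).sub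
      (measurable_const.indicator hG)).abs.aestronglyMeasurable
  · exact Eventually.of_forall fun a => Eventually.of_forall fun p => by
      rw [Real.norm_eq_abs, abs_abs]
      exact abs_indApprox_sub_indicator_le_one hG a.1 a.2 p
  · exact integrableOn_const isCompact_unitSquare.measure_ne_top
  · filter_upwards [ae_restrict_mem isCompact_unitSquare.measurableSet,
      ae_restrict_of_ae hfrontier] with p hp hpG
    simpa using ((tendsto_indApprox_of_notMem_frontier hG hp hpG).sub_const
      (G.indicator (fun _ => (1:ℝ)) p)).abs

theorem stmt_8 (G : Set (ℝ × ℝ)) (hGcl : IsClosed G) (hGcv : Convex ℝ G)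
    (hGsub : G ⊆ Set.Icc (0:ℝ) 1 ×ˢ Set.Icc (0:ℝ) 1) :
    Tendsto (fun a : ℕ × ℕ =>
        ∫ p in Set.Icc (0:ℝ) 1 ×ˢ Set.Icc (0:ℝ) 1,
          |indApprox G a.1 a.2 p.1 p.2 - Set.indicator G (fun _ => (1:ℝ)) p|)
      atTop (nhds 0) :=
  stmt_8_general G hGcl hGcv
end

section
/- Let u, v ∈ [0,1] and B_α(u,v) = Σ_{k=0}^{⌊αv⌋} C(α,k) u^k (1−u)^{α−k}. If u < v then B_α(u,v) → 1 as α → ∞, and if u > v then B_α(u,v) → 0 as α → ∞. -/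
open Filter Finset


/-- Cumulative binomial probability `B_α(u,v) = Σ_{k=0}^{⌊αv⌋} C(α,k) u^k (1−u)^(α−k)`. -/
noncomputable def binCdf (α : ℕ) (u v : ℝ) : ℝ :=
  ∑ k ∈ Finset.range (⌊(α : ℝ) * v⌋₊ + 1), (α.choose k : ℝ) * u ^ k * (1 - u) ^ (α - k)

lemma eval_bp (α k : ℕ) (u : ℝ) :
    (bernsteinPolynomial ℝ α k).eval u = (α.choose k : ℝ) * u ^ k * (1 - u) ^ (α - k) := by
  simp [bernsteinPolynomial]

lemma sum_p (α : ℕ) (u : ℝ) :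
    ∑ k ∈ Finset.range (α + 1), (α.choose k : ℝ) * u ^ k * (1 - u) ^ (α - k) = 1 := by
  have h := congrArg (Polynomial.eval u) (bernsteinPolynomial.sum ℝ α)
  simpa [Polynomial.eval_finset_sum, eval_bp] using h

lemma var_p (α : ℕ) (u : ℝ) :
    ∑ k ∈ Finset.range (α + 1),
      ((α : ℝ) * u - k) ^ 2 * ((α.choose k : ℝ) * u ^ k * (1 - u) ^ (α - k))
      = α * u * (1 - u) := by
  have h := congrArg (Polynomial.eval u) (bernsteinPolynomial.variance ℝ α)
  simpa [Polynomial.eval_finset_sum, eval_bp, nsmul_eq_mul] using h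

lemma p_nonneg (α k : ℕ) {u : ℝ} (h0 : 0 ≤ u) (h1 : u ≤ 1) :
    0 ≤ (α.choose k : ℝ) * u ^ k * (1 - u) ^ (α - k) := by
  exact mul_nonneg (mul_nonneg (by positivity) (pow_nonneg h0 _)) (pow_nonneg (by linarith) _)

lemma cheb (α : ℕ) {u ε : ℝ} (h0 : 0 ≤ u) (h1 : u ≤ 1) (hε : 0 < ε) (hα : 1 ≤ α)
    (S : Finset ℕ) (hS : S ⊆ Finset.range (α + 1))
    (h : ∀ k ∈ S, (α : ℝ) * ε ≤ |(α : ℝ) * u - k|) :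
    ∑ k ∈ S, (α.choose k : ℝ) * u ^ k * (1 - u) ^ (α - k) ≤ 1 / (4 * ε ^ 2) / α := by
  have hαR : (1 : ℝ) ≤ α := by exact_mod_cast hα
  have hαpos : (0:ℝ) < α := by linarith
  have step1 : ((α : ℝ) * ε) ^ 2 * ∑ k ∈ S, (α.choose k : ℝ) * u ^ k * (1 - u) ^ (α - k)
      ≤ α * u * (1 - u) := by
    rw [Finset.mul_sum]
    calc ∑ k ∈ S, ((α : ℝ) * ε) ^ 2 * ((α.choose k : ℝ) * u ^ k * (1 - u) ^ (α - k))
        ≤ ∑ k ∈ S, ((α : ℝ) * u - k) ^ 2 * ((α.choose k : ℝ) * u ^ k * (1 - u) ^ (α - k)) := by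
          apply Finset.sum_le_sum
          intro k hk
          have h2 : ((α : ℝ) * ε) ^ 2 ≤ ((α : ℝ) * u - k) ^ 2 := by
            rw [← sq_abs ((α : ℝ) * u - k)]
            apply pow_le_pow_left₀ (by positivity) (h k hk)
          exact mul_le_mul_of_nonneg_right h2 (p_nonneg α k h0 h1)
      _ ≤ ∑ k ∈ Finset.range (α + 1),
            ((α : ℝ) * u - k) ^ 2 * ((α.choose k : ℝ) * u ^ k * (1 - u) ^ (α - k)) := by
          apply Finset.sum_le_sum_of_subset_of_nonneg hS
          intro k _ _
          have := p_nonneg α k h0 h1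
          positivity
      _ = α * u * (1 - u) := var_p α u
  have huu : u * (1 - u) ≤ 1 / 4 := by nlinarith [sq_nonneg (2*u-1)]
  have hsq : (0:ℝ) < ((α : ℝ) * ε) ^ 2 := by positivity
  rw [div_div, le_div_iff₀ (by positivity)]
  calc (∑ k ∈ S, (α.choose k : ℝ) * u ^ k * (1 - u) ^ (α - k)) * (4 * ε ^ 2 * α)
      = (((α : ℝ) * ε) ^ 2 * ∑ k ∈ S, (α.choose k : ℝ) * u ^ k * (1 - u) ^ (α - k)) * (4 / α) := by
        field_simp
    _ ≤ (α * u * (1 - u)) * (4 / α) := by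
        apply mul_le_mul_of_nonneg_right step1 (by positivity)
    _ ≤ (α * (1/4)) * (4 / α) := by
        apply mul_le_mul_of_nonneg_right _ (by positivity)
        rw [mul_assoc]
        exact mul_le_mul_of_nonneg_left huu (le_of_lt hαpos)
    _ = 1 := by field_simp

lemma hfloor (v : ℝ) (hv1 : v ≤ 1) (α : ℕ) : ⌊(α:ℝ) * v⌋₊ + 1 ≤ α + 1 := by
  have h1 : (α:ℝ) * v ≤ α := by nlinarith [Nat.cast_nonneg (α := ℝ) α]
  have h2 : ⌊(α:ℝ) * v⌋₊ ≤ ⌊(α:ℝ)⌋₊ := Nat.floor_le_floor h1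
  simpa [Nat.floor_natCast] using Nat.add_le_add_right h2 1

theorem stmt_12 (u v : ℝ) (hu : u ∈ Set.Icc (0:ℝ) 1) (hv : v ∈ Set.Icc (0:ℝ) 1) :
    (u < v → Tendsto (fun α : ℕ => binCdf α u v) atTop (nhds 1)) ∧
    (v < u → Tendsto (fun α : ℕ => binCdf α u v) atTop (nhds 0)) := by
  obtain ⟨hu0, hu1⟩ := hu
  obtain ⟨hv0, hv1⟩ := hv
  constructor
  · intro huv
    set ε := v - u with hεdef
    have hε : 0 < ε := by linarith
    set T : ℕ → ℝ := fun α => ∑ k ∈ Finset.Ico (⌊(α:ℝ)*v⌋₊+1) (α+1),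
      (α.choose k : ℝ) * u ^ k * (1 - u) ^ (α - k) with hT
    have key : ∀ α : ℕ, binCdf α u v = 1 - T α := by
      intro α
      have hs := sum_p α u
      rw [Finset.range_eq_Ico,
        ← Finset.sum_Ico_consecutive _ (Nat.zero_le _) (hfloor v hv1 α)] at hs
      rw [binCdf, Finset.range_eq_Ico, hT]
      linarith
    have tail_bound : ∀ α : ℕ, 1 ≤ α → T α ≤ 1 / (4 * ε ^ 2) / α := by
      intro α hα
      apply cheb α hu0 hu1 hε hα
      · rw [Finset.range_eq_Ico]
        exact Finset.Ico_subset_Ico (Nat.zero_le _) le_rfl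
      · intro k hk
        rw [Finset.mem_Ico] at hk
        have hk1 : (⌊(α:ℝ)*v⌋₊:ℝ) + 1 ≤ k := by exact_mod_cast hk.1
        have h2 : (α:ℝ)*v < ⌊(α:ℝ)*v⌋₊ + 1 := Nat.lt_floor_add_one _
        exact le_abs.mpr (Or.inr (by nlinarith))
    have htail : Tendsto T atTop (nhds 0) := by
      apply tendsto_of_tendsto_of_tendsto_of_le_of_le'
        (tendsto_const_nhds (x := (0:ℝ)))
        (tendsto_const_div_atTop_nhds_zero_nat (1 / (4 * ε ^ 2)))
      · filter_upwards with α
        exact Finset.sum_nonneg fun k _ => p_nonneg α k hu0 hu1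
      · filter_upwards [eventually_ge_atTop 1] with α hα using tail_bound α hα
    have h1 : Tendsto (fun α : ℕ => 1 - T α) atTop (nhds (1 - 0)) :=
      (tendsto_const_nhds (x := (1:ℝ))).sub htail
    rw [sub_zero] at h1
    exact h1.congr fun α => (key α).symm
  · intro hvu
    set ε := u - v with hεdef
    have hε : 0 < ε := by linarith
    have bound : ∀ α : ℕ, 1 ≤ α → binCdf α u v ≤ 1 / (4 * ε ^ 2) / α := by
      intro α hα
      apply cheb α hu0 hu1 hε hα
      · exact Finset.range_subset_range.mpr (hfloor v hv1 α)
      · intro k hk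
        rw [Finset.mem_range, Nat.lt_succ_iff] at hk
        have hk1 : (k:ℝ) ≤ ⌊(α:ℝ)*v⌋₊ := by exact_mod_cast hk
        have h2 : (⌊(α:ℝ)*v⌋₊:ℝ) ≤ (α:ℝ)*v := Nat.floor_le (by positivity)
        exact le_abs.mpr (Or.inl (by nlinarith))
    apply tendsto_of_tendsto_of_tendsto_of_le_of_le'
      (tendsto_const_nhds (x := (0:ℝ)))
      (tendsto_const_div_atTop_nhds_zero_nat (1 / (4 * ε ^ 2)))
    · filter_upwards with α
      exact Finset.sum_nonneg fun k _ => p_nonneg α k hu0 hu1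
    · filter_upwards [eventually_ge_atTop 1] with α hα using bound α hα
end

section
/- Let F be the cumulative distribution function of a discrete probability measure on [0,1] supported on finitely many points x₀, …, x_N with masses p₀, …, p_N, i.e. F(x) = Σ_{k=0}^{N} p_k · 1_{[0,x)}(x_k), and let m(j) = Σ_{k=0}^{N} x_k^j p_k be its moments. Define F_α(x) = Σ_{k=0}^{⌊αx⌋} Σ_{j=k}^{α} C(α,j) C(j,k) (−1)^{j−k} m(j). Then for every x ∈ [0,1] with x ∉ {x₀, …, x_N}, F_α(x) → F(x) as α → ∞. -/
open Filter Finset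

private noncomputable def Bb (α i : ℕ) (t : ℝ) : ℝ :=
  (α.choose i : ℝ) * t ^ i * (1 - t) ^ (α - i)

private lemma Bb_eval (α i : ℕ) (t : ℝ) :
    Bb α i t = (bernsteinPolynomial ℝ α i).eval t := by
  simp [Bb, bernsteinPolynomial]

private lemma Bb_nonneg {t : ℝ} (h0 : 0 ≤ t) (h1 : t ≤ 1) (α i : ℕ) : 0 ≤ Bb α i t := by
  have h2 : (0:ℝ) ≤ 1 - t := by linarith
  exact mul_nonneg (mul_nonneg (by positivity) (pow_nonneg h0 _)) (pow_nonneg h2 _)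

private lemma Bb_sum (α : ℕ) (t : ℝ) : ∑ i ∈ range (α + 1), Bb α i t = 1 := by
  simp only [Bb_eval]
  rw [← Polynomial.eval_finset_sum, bernsteinPolynomial.sum]
  simp

private lemma Bb_variance (α : ℕ) (t : ℝ) :
    ∑ i ∈ range (α + 1), ((α : ℝ) * t - i) ^ 2 * Bb α i t = α * t * (1 - t) := by
  have h := congrArg (Polynomial.eval t) (bernsteinPolynomial.variance ℝ α)
  simpa [Polynomial.eval_finset_sum, Bb_eval, nsmul_eq_mul] using h

private lemma Bb_tail {t δ : ℝ} (h0 : 0 ≤ t) (h1 : t ≤ 1) (hδ : 0 < δ) {α : ℕ} (hα : 0 < α)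
    (s : Finset ℕ) (hs : s ⊆ range (α + 1))
    (hd : ∀ i ∈ s, δ * α ≤ |(i : ℝ) - α * t|) :
    ∑ i ∈ s, Bb α i t ≤ 1 / (4 * δ ^ 2) / α := by
  have hα' : (0:ℝ) < α := by exact_mod_cast hα
  have hS0 : 0 ≤ ∑ i ∈ s, Bb α i t := Finset.sum_nonneg fun i _ => Bb_nonneg h0 h1 α i
  have key : (δ * α) ^ 2 * ∑ i ∈ s, Bb α i t ≤ α * t * (1 - t) := by
    rw [Finset.mul_sum]
    calc ∑ i ∈ s, (δ * α) ^ 2 * Bb α i t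
        ≤ ∑ i ∈ s, ((α : ℝ) * t - i) ^ 2 * Bb α i t := by
          refine Finset.sum_le_sum fun i hi => ?_
          refine mul_le_mul_of_nonneg_right ?_ (Bb_nonneg h0 h1 α i)
          calc (δ * α) ^ 2 ≤ |(i : ℝ) - α * t| ^ 2 := by
                exact pow_le_pow_left₀ (by positivity) (hd i hi) 2
            _ = ((α : ℝ) * t - i) ^ 2 := by rw [sq_abs]; ring
      _ ≤ ∑ i ∈ range (α + 1), ((α : ℝ) * t - i) ^ 2 * Bb α i t :=
          Finset.sum_le_sum_of_subset_of_nonneg hs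
            (fun i _ _ => mul_nonneg (sq_nonneg _) (Bb_nonneg h0 h1 α i))
      _ = α * t * (1 - t) := Bb_variance α t
  have htt : t * (1 - t) ≤ 1 / 4 := by nlinarith [sq_nonneg (t - 1/2)]
  rw [div_div, le_div_iff₀ (by positivity)]
  nlinarith [key, mul_le_mul_of_nonneg_left htt (le_of_lt hα')]

private lemma tendsto_inv_aux (c : ℝ) :
    Tendsto (fun α : ℕ => c / α) atTop (nhds 0) :=
  tendsto_const_div_atTop_nhds_zero_nat c

private lemma tendsto_G_gt {x t : ℝ} (hx0 : 0 ≤ x) (h0 : 0 ≤ t) (ht1 : t ≤ 1) (hlt : x < t) :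
    Tendsto (fun α : ℕ => ∑ i ∈ range (⌊(α : ℝ) * x⌋₊ + 1), Bb α i t) atTop (nhds 0) := by
  set δ := t - x with hδdef
  have hδ : 0 < δ := by simp [hδdef]; linarith
  refine tendsto_of_tendsto_of_tendsto_of_le_of_le' (tendsto_const_nhds)
    (tendsto_inv_aux (1 / (4 * δ ^ 2))) ?_ ?_
  · exact Eventually.of_forall fun α =>
      Finset.sum_nonneg fun i _ => Bb_nonneg h0 ht1 α i
  · filter_upwards [eventually_ge_atTop 1] with α hα
    refine Bb_tail h0 ht1 hδ hα _ ?_ ?_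
    · intro i hi
      simp only [Finset.mem_range, Nat.lt_succ_iff] at hi ⊢
      calc i ≤ ⌊(α : ℝ) * x⌋₊ := hi
        _ ≤ ⌊(α : ℝ)⌋₊ := Nat.floor_le_floor (by nlinarith [Nat.cast_nonneg (α := ℝ) α])
        _ = α := Nat.floor_natCast α
    · intro i hi
      simp only [Finset.mem_range, Nat.lt_succ_iff] at hi
      have hif : (i : ℝ) ≤ (α : ℝ) * x := by
        calc (i : ℝ) ≤ (⌊(α : ℝ) * x⌋₊ : ℝ) := by exact_mod_cast hi
          _ ≤ (α : ℝ) * x := Nat.floor_le (by positivity)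
      have : δ * α ≤ (α : ℝ) * t - i := by
        have : (0:ℝ) ≤ α := Nat.cast_nonneg α
        nlinarith
      calc δ * α ≤ (α : ℝ) * t - i := this
        _ ≤ |(α : ℝ) * t - i| := le_abs_self _
        _ = |(i : ℝ) - α * t| := abs_sub_comm _ _

private lemma tendsto_G_lt {x t : ℝ} (h0 : 0 ≤ t) (ht1 : t ≤ 1) (hx1 : x ≤ 1) (hlt : t < x) :
    Tendsto (fun α : ℕ => ∑ i ∈ range (⌊(α : ℝ) * x⌋₊ + 1), Bb α i t) atTop (nhds 1) := by
  set δ := x - t with hδdef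
  have hδ : 0 < δ := by simp [hδdef]; linarith
  have hfl : ∀ α : ℕ, ⌊(α : ℝ) * x⌋₊ + 1 ≤ α + 1 := by
    intro α
    have : ⌊(α : ℝ) * x⌋₊ ≤ ⌊(α : ℝ)⌋₊ :=
      Nat.floor_le_floor (by nlinarith [Nat.cast_nonneg (α := ℝ) α])
    simpa [Nat.floor_natCast] using Nat.succ_le_succ this
  have hsplit : ∀ α : ℕ,
      ∑ i ∈ range (⌊(α : ℝ) * x⌋₊ + 1), Bb α i t
        = 1 - ∑ i ∈ Finset.Ico (⌊(α : ℝ) * x⌋₊ + 1) (α + 1), Bb α i t := by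
    intro α
    have h1 := Bb_sum α t
    rw [Finset.range_eq_Ico] at h1 ⊢
    rw [← Finset.sum_Ico_consecutive (fun i => Bb α i t) (Nat.zero_le _) (hfl α)] at h1
    linarith
  have htail : Tendsto (fun α : ℕ =>
      ∑ i ∈ Finset.Ico (⌊(α : ℝ) * x⌋₊ + 1) (α + 1), Bb α i t) atTop (nhds 0) := by
    refine tendsto_of_tendsto_of_tendsto_of_le_of_le' (tendsto_const_nhds)
      (tendsto_inv_aux (1 / (4 * δ ^ 2))) ?_ ?_
    · exact Eventually.of_forall fun α =>
        Finset.sum_nonneg fun i _ => Bb_nonneg h0 ht1 α i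
    · filter_upwards [eventually_ge_atTop 1] with α hα
      refine Bb_tail h0 ht1 hδ hα _ ?_ ?_
      · intro i hi
        simp only [Finset.mem_Ico] at hi
        simp only [Finset.mem_range]
        omega
      · intro i hi
        simp only [Finset.mem_Ico] at hi
        have hif : (α : ℝ) * x < i := by
          calc (α : ℝ) * x < ⌊(α : ℝ) * x⌋₊ + 1 := Nat.lt_floor_add_one _
            _ ≤ (i : ℝ) := by exact_mod_cast hi.1
        have : δ * α ≤ (i : ℝ) - α * t := by
          have : (0:ℝ) ≤ α := Nat.cast_nonneg α
          nlinarith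
        calc δ * α ≤ (i : ℝ) - α * t := this
          _ ≤ |(i : ℝ) - α * t| := le_abs_self _
  have := htail.const_sub 1
  simp only [sub_zero] at this
  exact this.congr fun α => (hsplit α).symm

private lemma aux_inner (α i : ℕ) (t : ℝ) :
    ∑ j ∈ Finset.Icc i α,
      (α.choose j : ℝ) * (j.choose i : ℝ) * (-1 : ℝ) ^ (j - i) * t ^ j = Bb α i t := by
  rcases le_or_gt i α with h | h
  · rw [← Finset.Ico_add_one_right_eq_Icc, Finset.sum_Ico_eq_sum_range]
    have h1 : α + 1 - i = (α - i) + 1 := by omega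
    rw [h1]
    unfold Bb
    have h2 : (1 - t) ^ (α - i)
        = ∑ l ∈ range ((α - i) + 1), (-t) ^ l * 1 ^ (α - i - l) * ((α - i).choose l : ℝ) := by
      rw [show (1 : ℝ) - t = -t + 1 by ring, add_pow]
    rw [h2, Finset.mul_sum]
    refine Finset.sum_congr rfl fun l hl => ?_
    have hl' : l ≤ α - i := by simpa [Nat.lt_succ_iff] using hl
    have hc : (α.choose (i + l) : ℝ) * ((i + l).choose i : ℝ)
        = (α.choose i : ℝ) * ((α - i).choose l : ℝ) := by
      rw [← Nat.cast_mul, ← Nat.cast_mul, Nat.choose_mul (by omega),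
        Nat.add_sub_cancel_left]
    rw [Nat.add_sub_cancel_left]
    linear_combination ((-1 : ℝ) ^ l * t ^ (i + l)) * hc
  · rw [Finset.Icc_eq_empty_of_lt h, Finset.sum_empty]
    unfold Bb
    rw [Nat.choose_eq_zero_of_lt h]
    simp

theorem stmt_13 (N : ℕ) (xs : Fin (N + 1) → ℝ) (p : Fin (N + 1) → ℝ)
    (hxs : ∀ k, xs k ∈ Set.Icc (0:ℝ) 1) (hp : ∀ k, 0 ≤ p k) (hsum : ∑ k, p k = 1)
    (F : ℝ → ℝ)
    (hF : ∀ x, F x = ∑ k, p k * Set.indicator (Set.Ico (0:ℝ) x) (fun _ => (1:ℝ)) (xs k))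
    (m : ℕ → ℝ) (hm : ∀ j, m j = ∑ k, xs k ^ j * p k)
    (x : ℝ) (hx : x ∈ Set.Icc (0:ℝ) 1) (hxne : ∀ k, x ≠ xs k) :
    Tendsto (fun α : ℕ =>
        ∑ k ∈ Finset.range (⌊(α : ℝ) * x⌋₊ + 1), ∑ j ∈ Finset.Icc k α,
          (α.choose j : ℝ) * (j.choose k : ℝ) * (-1 : ℝ) ^ (j - k) * m j)
      atTop (nhds (F x)) := by
  have key : ∀ α : ℕ,
      (∑ k ∈ Finset.range (⌊(α : ℝ) * x⌋₊ + 1), ∑ j ∈ Finset.Icc k α,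
          (α.choose j : ℝ) * (j.choose k : ℝ) * (-1 : ℝ) ^ (j - k) * m j)
        = ∑ k : Fin (N + 1), p k * ∑ i ∈ range (⌊(α : ℝ) * x⌋₊ + 1), Bb α i (xs k) := by
    intro α
    calc (∑ i ∈ Finset.range (⌊(α : ℝ) * x⌋₊ + 1), ∑ j ∈ Finset.Icc i α,
          (α.choose j : ℝ) * (j.choose i : ℝ) * (-1 : ℝ) ^ (j - i) * m j)
        = ∑ i ∈ Finset.range (⌊(α : ℝ) * x⌋₊ + 1), ∑ j ∈ Finset.Icc i α,
            ∑ k : Fin (N + 1),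
            (α.choose j : ℝ) * (j.choose i : ℝ) * (-1 : ℝ) ^ (j - i) * (xs k ^ j * p k) := by
          simp only [hm, Finset.mul_sum]
      _ = ∑ k : Fin (N + 1), ∑ i ∈ Finset.range (⌊(α : ℝ) * x⌋₊ + 1), ∑ j ∈ Finset.Icc i α,
            (α.choose j : ℝ) * (j.choose i : ℝ) * (-1 : ℝ) ^ (j - i) * (xs k ^ j * p k) := by
          rw [← Finset.sum_comm]
          exact Finset.sum_congr rfl fun i _ => Finset.sum_comm
      _ = ∑ k : Fin (N + 1), p k * ∑ i ∈ range (⌊(α : ℝ) * x⌋₊ + 1), Bb α i (xs k) := by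
          refine Finset.sum_congr rfl fun k _ => ?_
          rw [Finset.mul_sum]
          refine Finset.sum_congr rfl fun i _ => ?_
          rw [← aux_inner α i (xs k), Finset.mul_sum]
          exact Finset.sum_congr rfl fun j _ => by ring
  rw [show (fun α : ℕ =>
      ∑ k ∈ Finset.range (⌊(α : ℝ) * x⌋₊ + 1), ∑ j ∈ Finset.Icc k α,
        (α.choose j : ℝ) * (j.choose k : ℝ) * (-1 : ℝ) ^ (j - k) * m j)
    = fun α : ℕ => ∑ k : Fin (N + 1), p k * ∑ i ∈ range (⌊(α : ℝ) * x⌋₊ + 1), Bb α i (xs k)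
    from funext key, hF x]
  refine tendsto_finset_sum _ fun k _ => ?_
  rcases lt_or_gt_of_ne (hxne k) with h | h
  · -- x < xs k : indicator is 0, limit 0
    have hind : Set.indicator (Set.Ico (0:ℝ) x) (fun _ => (1:ℝ)) (xs k) = 0 := by
      apply Set.indicator_of_notMem
      simp only [Set.mem_Ico, not_and, not_lt]
      intro _
      linarith
    rw [hind, mul_zero]
    have := (tendsto_G_gt hx.1 (hxs k).1 (hxs k).2 h).const_mul (p k)
    simpa using this
  · -- xs k < x : indicator is 1, limit p k
    have hind : Set.indicator (Set.Ico (0:ℝ) x) (fun _ => (1:ℝ)) (xs k) = 1 := by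
      apply Set.indicator_of_mem
      exact ⟨(hxs k).1, h⟩
    rw [hind, mul_one]
    have := (tendsto_G_lt (hxs k).1 (hxs k).2 hx.2 h).const_mul (p k)
    simpa using this
end

section
/- Let μ be a discrete probability measure on [0,1]² supported on finitely many points (x_i, y_j), 0 ≤ i, j ≤ N, with masses p_{i,j}, let F(x,y) = Σ_{i,j} p_{i,j} 1_{[0,x)}(x_i) 1_{[0,y)}(y_j) be its cumulative distribution function, and let m(j,n) = ∫_{[0,1]²} t^j s^n dμ(t,s) be its product moments. Define F_a(x,y) = Σ_{k=0}^{⌊αx⌋} Σ_{l=0}^{⌊α′y⌋} Σ_{j=k}^{α} Σ_{n=l}^{α′} C(α,j) C(j,k) C(α′,n) C(n,l) (−1)^{j+n−k−l} m(j,n) for a = (α, α′) ∈ ℕ₊ × ℕ₊. Then for every (x,y) ∈ [0,1]² such that x ∉ {x₀, …, x_N} and y ∉ {y₀, …, y_N}, F_a(x,y) → F(x,y) as α, α′ → ∞. -/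
open Filter Finset
lemma st15_inner_sum (α k : ℕ) (t : ℝ) :
    ∑ j ∈ Finset.Icc k α, (α.choose j : ℝ) * (j.choose k : ℝ) * (-1:ℝ)^(j-k) * t^j
      = (α.choose k : ℝ) * t^k * (1-t)^(α-k) := by
  by_cases hk : k ≤ α
  · rw [← Finset.Ico_add_one_right_eq_Icc, Finset.sum_Ico_eq_sum_range]
    have hrange : α + 1 - k = α - k + 1 := by omega
    rw [hrange]
    have hpow := add_pow (-t) 1 (α - k)
    simp only [neg_add_eq_sub, one_pow, mul_one] at hpow
    rw [hpow, Finset.mul_sum]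
    refine Finset.sum_congr rfl fun i hi => ?_
    have hi' : i ≤ α - k := by simpa [Nat.lt_succ_iff] using hi
    have hc : α.choose (k + i) * (k + i).choose k = α.choose k * (α - k).choose i := by
      rw [Nat.choose_mul (by omega)]
      congr 2 <;> omega
    have hc' : ((α.choose (k+i) : ℝ)) * ((k+i).choose k : ℝ) = (α.choose k : ℝ) * ((α-k).choose i : ℝ) := by
      exact_mod_cast congrArg (Nat.cast : ℕ → ℝ) hc
    have : k + i - k = i := by omega
    rw [this]
    calc (α.choose (k+i) : ℝ) * ((k+i).choose k : ℝ) * (-1:ℝ)^i * t^(k+i)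
        = ((α.choose (k+i) : ℝ) * ((k+i).choose k : ℝ)) * ((-1:ℝ)^i * t^(k+i)) := by ring
      _ = ((α.choose k : ℝ) * ((α-k).choose i : ℝ)) * ((-1:ℝ)^i * t^(k+i)) := by rw [hc']
      _ = (α.choose k : ℝ) * t^k * ((-t)^i * ((α-k).choose i : ℝ)) := by
          rw [neg_pow, pow_add]; ring
  · rw [Finset.Icc_eq_empty (by omega), Nat.choose_eq_zero_of_lt (by omega)]
    simp

lemma bern_sum (n : ℕ) (t : ℝ) : ∑ k ∈ range (n+1), (n.choose k:ℝ)*t^k*(1-t)^(n-k) = 1 := by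
  have h := add_pow t (1-t) n
  simp only [add_sub_cancel, one_pow] at h
  conv_rhs => rw [h]
  exact Finset.sum_congr rfl fun k _ => by ring

lemma bern_var (n : ℕ) (t : ℝ) :
    ∑ k ∈ range (n+1), ((n:ℝ)*t - k)^2 * ((n.choose k:ℝ) * t^k * (1-t)^(n-k)) = n*t*(1-t) := by
  have h := bernsteinPolynomial.variance (R := ℝ) n
  have h2 := congrArg (Polynomial.eval t) h
  simp only [Polynomial.eval_finset_sum, Polynomial.eval_mul, Polynomial.eval_pow,
    Polynomial.eval_sub, Polynomial.eval_smul, Polynomial.eval_natCast, Polynomial.eval_X,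
    Polynomial.eval_one, bernsteinPolynomial, smul_eq_mul, nsmul_eq_mul] at h2
  rw [← h2]

lemma st15_cheb (n : ℕ) (t : ℝ) (ht0 : 0 ≤ t) (ht1 : t ≤ 1) (s : Finset ℕ)
    (hs : s ⊆ range (n+1)) (c : ℝ) (hc : 0 < c)
    (h : ∀ k ∈ s, c ≤ ((n:ℝ)*t - k)^2) :
    ∑ k ∈ s, (n.choose k:ℝ)*t^k*(1-t)^(n-k) ≤ (n:ℝ)*t*(1-t)/c := by
  have hterm : ∀ k : ℕ, 0 ≤ (n.choose k:ℝ)*t^k*(1-t)^(n-k) := fun k =>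
    mul_nonneg (mul_nonneg (Nat.cast_nonneg _) (pow_nonneg ht0 _)) (pow_nonneg (by linarith) _)
  calc ∑ k ∈ s, (n.choose k:ℝ)*t^k*(1-t)^(n-k)
      ≤ ∑ k ∈ s, ((n:ℝ)*t - k)^2 * ((n.choose k:ℝ)*t^k*(1-t)^(n-k)) / c := by
        refine Finset.sum_le_sum fun k hk => ?_
        rw [le_div_iff₀ hc]
        nlinarith [hterm k, h k hk]
    _ ≤ ∑ k ∈ range (n+1), ((n:ℝ)*t - k)^2 * ((n.choose k:ℝ)*t^k*(1-t)^(n-k)) / c := by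
        refine Finset.sum_le_sum_of_subset_of_nonneg hs fun k _ _ =>
          div_nonneg (mul_nonneg (sq_nonneg _) (hterm k)) hc.le
    _ = (∑ k ∈ range (n+1), ((n:ℝ)*t - k)^2 * ((n.choose k:ℝ)*t^k*(1-t)^(n-k))) / c := by
        rw [Finset.sum_div]
    _ = (n:ℝ)*t*(1-t)/c := by rw [bern_var]

lemma st15_tendsto (x t : ℝ) (hx0 : 0 ≤ x) (hx1 : x ≤ 1) (ht0 : 0 ≤ t) (ht1 : t ≤ 1)
    (hne : t ≠ x) :
    Tendsto (fun n : ℕ => ∑ k ∈ range (⌊(n:ℝ)*x⌋₊+1), (n.choose k:ℝ)*t^k*(1-t)^(n-k))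
      atTop (nhds (if t < x then 1 else 0)) := by
  have hterm : ∀ n k : ℕ, 0 ≤ (n.choose k:ℝ)*t^k*(1-t)^(n-k) := fun n k =>
    mul_nonneg (mul_nonneg (Nat.cast_nonneg _) (pow_nonneg ht0 _)) (pow_nonneg (by linarith) _)
  have hfl : ∀ n : ℕ, ⌊(n:ℝ)*x⌋₊ ≤ n := fun n => by
    calc ⌊(n:ℝ)*x⌋₊ ≤ ⌊(n:ℝ)⌋₊ :=
          Nat.floor_mono (mul_le_of_le_one_right (Nat.cast_nonneg n) hx1)
      _ = n := Nat.floor_natCast n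
  by_cases hlt : t < x
  · rw [if_pos hlt]
    set C := t*(1-t)/((x-t)^2) with hC
    have hbound : ∀ n : ℕ, 1 ≤ n →
        1 - C/n ≤ ∑ k ∈ range (⌊(n:ℝ)*x⌋₊+1), (n.choose k:ℝ)*t^k*(1-t)^(n-k) ∧
        ∑ k ∈ range (⌊(n:ℝ)*x⌋₊+1), (n.choose k:ℝ)*t^k*(1-t)^(n-k) ≤ 1 := by
      intro n hn
      have hsplit : (∑ k ∈ range (⌊(n:ℝ)*x⌋₊+1), (n.choose k:ℝ)*t^k*(1-t)^(n-k))
          + ∑ k ∈ Ico (⌊(n:ℝ)*x⌋₊+1) (n+1), (n.choose k:ℝ)*t^k*(1-t)^(n-k) = 1 := by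
        rw [Finset.sum_range_add_sum_Ico _ (by have := hfl n; omega : ⌊(n:ℝ)*x⌋₊+1 ≤ n+1), bern_sum]
      have hn0 : (0:ℝ) < n := by exact_mod_cast hn
      have hc : (0:ℝ) < ((n:ℝ)*(x-t))^2 := pow_pos (mul_pos hn0 (sub_pos.mpr hlt)) 2
      constructor
      · have htail : ∑ k ∈ Ico (⌊(n:ℝ)*x⌋₊+1) (n+1), (n.choose k:ℝ)*t^k*(1-t)^(n-k)
            ≤ (n:ℝ)*t*(1-t)/(((n:ℝ)*(x-t))^2) := by
          refine st15_cheb n t ht0 ht1 _ ?_ _ hc ?_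
          · intro k hk; simp only [Finset.mem_Ico, Finset.mem_range] at hk ⊢; omega
          · intro k hk
            simp only [Finset.mem_Ico] at hk
            have h1 : (n:ℝ)*x < k := by
              have := Nat.lt_floor_add_one ((n:ℝ)*x)
              have : ((⌊(n:ℝ)*x⌋₊ + 1 : ℕ):ℝ) ≤ k := by exact_mod_cast hk.1
              push_cast at this
              nlinarith [Nat.lt_floor_add_one ((n:ℝ)*x)]
            have h2 : (0:ℝ) ≤ (n:ℝ)*(x-t) := by nlinarith
            have h3 : (n:ℝ)*(x-t) ≤ (k:ℝ) - n*t := by nlinarith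
            calc ((n:ℝ)*(x-t))^2 ≤ ((k:ℝ) - n*t)^2 := pow_le_pow_left₀ h2 h3 2
              _ = ((n:ℝ)*t - k)^2 := by ring
        have hxt : x - t ≠ 0 := sub_ne_zero.mpr (Ne.symm hne)
        have hnne : (n:ℝ) ≠ 0 := ne_of_gt hn0
        have heq : (n:ℝ)*t*(1-t)/(((n:ℝ)*(x-t))^2) = C/n := by
          rw [hC]; field_simp
        rw [heq] at htail
        linarith
      · calc ∑ k ∈ range (⌊(n:ℝ)*x⌋₊+1), (n.choose k:ℝ)*t^k*(1-t)^(n-k)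
            ≤ ∑ k ∈ range (n+1), (n.choose k:ℝ)*t^k*(1-t)^(n-k) :=
              Finset.sum_le_sum_of_subset_of_nonneg
                (Finset.range_subset_range.mpr (by have := hfl n; omega)) (fun k _ _ => hterm n k)
          _ = 1 := bern_sum n t
    have hg : Tendsto (fun n : ℕ => 1 - C/n) atTop (nhds 1) := by
      have h0 := Tendsto.const_sub (1:ℝ) (tendsto_const_div_atTop_nhds_zero_nat C)
      simpa using h0
    refine tendsto_of_tendsto_of_tendsto_of_le_of_le' hg tendsto_const_nhds ?_ ?_
    · filter_upwards [eventually_ge_atTop 1] with n hn using (hbound n hn).1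
    · filter_upwards [eventually_ge_atTop 1] with n hn using (hbound n hn).2
  · rw [if_neg hlt]
    have hgt : x < t := lt_of_le_of_ne (not_lt.mp hlt) (Ne.symm hne)
    set C := t*(1-t)/((t-x)^2) with hC
    have hbound : ∀ n : ℕ, 1 ≤ n →
        ∑ k ∈ range (⌊(n:ℝ)*x⌋₊+1), (n.choose k:ℝ)*t^k*(1-t)^(n-k) ≤ C/n := by
      intro n hn
      have hn0 : (0:ℝ) < n := by exact_mod_cast hn
      have hc : (0:ℝ) < ((n:ℝ)*(t-x))^2 := pow_pos (mul_pos hn0 (sub_pos.mpr hgt)) 2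
      have htail : ∑ k ∈ range (⌊(n:ℝ)*x⌋₊+1), (n.choose k:ℝ)*t^k*(1-t)^(n-k)
          ≤ (n:ℝ)*t*(1-t)/(((n:ℝ)*(t-x))^2) := by
        refine st15_cheb n t ht0 ht1 _ (Finset.range_subset_range.mpr (by have := hfl n; omega)) _ hc ?_
        intro k hk
        simp only [Finset.mem_range] at hk
        have h1 : (k:ℝ) ≤ (n:ℝ)*x := by
          have hk' : k ≤ ⌊(n:ℝ)*x⌋₊ := by omega
          calc (k:ℝ) ≤ (⌊(n:ℝ)*x⌋₊ : ℝ) := by exact_mod_cast hk'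
            _ ≤ (n:ℝ)*x := Nat.floor_le (by positivity)
        have h2 : (0:ℝ) ≤ (n:ℝ)*(t-x) := by nlinarith
        have h3 : (n:ℝ)*(t-x) ≤ (n:ℝ)*t - k := by nlinarith
        exact pow_le_pow_left₀ h2 h3 2
      have hxt : t - x ≠ 0 := sub_ne_zero.mpr (ne_of_gt hgt)
      have hnne : (n:ℝ) ≠ 0 := ne_of_gt hn0
      have heq : (n:ℝ)*t*(1-t)/(((n:ℝ)*(t-x))^2) = C/n := by
        rw [hC]; field_simp
      rw [heq] at htail
      linarith
    have hg : Tendsto (fun n : ℕ => C/n) atTop (nhds 0) := tendsto_const_div_atTop_nhds_zero_nat C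
    refine tendsto_of_tendsto_of_tendsto_of_le_of_le' tendsto_const_nhds hg ?_ ?_
    · filter_upwards with n using Finset.sum_nonneg fun k _ => hterm n k
    · filter_upwards [eventually_ge_atTop 1] with n hn using hbound n hn

lemma st15_fubini {ι₁ ι₂ : Type*} [Fintype ι₁] [Fintype ι₂]
    (R1 R2 : Finset ℕ) (s1 s2 : ℕ → Finset ℕ)
    (A : ℕ → ℕ → ι₁ → ℝ) (B : ℕ → ℕ → ι₂ → ℝ) (p : ι₁ → ι₂ → ℝ) :
    (∑ k ∈ R1, ∑ l ∈ R2, ∑ j ∈ s1 k, ∑ n ∈ s2 l, ∑ i : ι₁, ∑ q : ι₂,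
        A k j i * B l n q * p i q)
    = ∑ i : ι₁, ∑ q : ι₂,
        (∑ k ∈ R1, ∑ j ∈ s1 k, A k j i) * (∑ l ∈ R2, ∑ n ∈ s2 l, B l n q) * p i q := by
  have key : (∑ k ∈ R1, ∑ l ∈ R2, ∑ j ∈ s1 k, ∑ n ∈ s2 l, ∑ r : ι₁ × ι₂,
        A k j r.1 * B l n r.2 * p r.1 r.2)
      = ∑ r : ι₁ × ι₂, ∑ k ∈ R1, ∑ l ∈ R2, ∑ j ∈ s1 k, ∑ n ∈ s2 l,
        A k j r.1 * B l n r.2 * p r.1 r.2 := by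
    refine (Finset.sum_congr rfl fun k _ => Finset.sum_congr rfl fun l _ =>
      Finset.sum_congr rfl fun j _ => Finset.sum_comm).trans ?_
    refine (Finset.sum_congr rfl fun k _ => Finset.sum_congr rfl fun l _ =>
      Finset.sum_comm).trans ?_
    refine (Finset.sum_congr rfl fun k _ => Finset.sum_comm).trans ?_
    exact Finset.sum_comm
  calc (∑ k ∈ R1, ∑ l ∈ R2, ∑ j ∈ s1 k, ∑ n ∈ s2 l, ∑ i : ι₁, ∑ q : ι₂,
        A k j i * B l n q * p i q)
      = ∑ k ∈ R1, ∑ l ∈ R2, ∑ j ∈ s1 k, ∑ n ∈ s2 l, ∑ r : ι₁ × ι₂,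
        A k j r.1 * B l n r.2 * p r.1 r.2 := by
        refine Finset.sum_congr rfl fun k _ => Finset.sum_congr rfl fun l _ =>
          Finset.sum_congr rfl fun j _ => Finset.sum_congr rfl fun n _ => ?_
        rw [Fintype.sum_prod_type]
    _ = ∑ r : ι₁ × ι₂, ∑ k ∈ R1, ∑ l ∈ R2, ∑ j ∈ s1 k, ∑ n ∈ s2 l,
        A k j r.1 * B l n r.2 * p r.1 r.2 := key
    _ = ∑ r : ι₁ × ι₂,
        (∑ k ∈ R1, ∑ j ∈ s1 k, A k j r.1) * (∑ l ∈ R2, ∑ n ∈ s2 l, B l n r.2) * p r.1 r.2 := by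
        refine Finset.sum_congr rfl fun r _ => ?_
        rw [Finset.sum_mul_sum, Finset.sum_mul]
        refine Finset.sum_congr rfl fun k _ => ?_
        rw [Finset.sum_mul]
        refine Finset.sum_congr rfl fun l _ => ?_
        rw [Finset.sum_mul_sum, Finset.sum_mul]
        refine Finset.sum_congr rfl fun j _ => ?_
        rw [Finset.sum_mul]
    _ = ∑ i : ι₁, ∑ q : ι₂,
        (∑ k ∈ R1, ∑ j ∈ s1 k, A k j i) * (∑ l ∈ R2, ∑ n ∈ s2 l, B l n q) * p i q := by
        rw [Fintype.sum_prod_type]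

lemma st15_eq (M : ℕ) (xs ys : Fin M → ℝ) (p : Fin M → Fin M → ℝ) (x y : ℝ) (a1 a2 : ℕ) :
    (∑ k ∈ Finset.range (⌊(a1:ℝ)*x⌋₊+1), ∑ l ∈ Finset.range (⌊(a2:ℝ)*y⌋₊+1),
       ∑ j ∈ Finset.Icc k a1, ∑ n ∈ Finset.Icc l a2,
         (a1.choose j:ℝ)*(j.choose k:ℝ)*(a2.choose n:ℝ)*(n.choose l:ℝ)*(-1:ℝ)^(j+n-k-l) *
           (∑ i, ∑ q, xs i ^ j * ys q ^ n * p i q))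
    = ∑ i, ∑ q, p i q *
        (∑ k ∈ Finset.range (⌊(a1:ℝ)*x⌋₊+1), (a1.choose k:ℝ)*(xs i)^k*(1-(xs i))^(a1-k)) *
        (∑ l ∈ Finset.range (⌊(a2:ℝ)*y⌋₊+1), (a2.choose l:ℝ)*(ys q)^l*(1-(ys q))^(a2-l)) := by
  calc (∑ k ∈ Finset.range (⌊(a1:ℝ)*x⌋₊+1), ∑ l ∈ Finset.range (⌊(a2:ℝ)*y⌋₊+1),
       ∑ j ∈ Finset.Icc k a1, ∑ n ∈ Finset.Icc l a2,
         (a1.choose j:ℝ)*(j.choose k:ℝ)*(a2.choose n:ℝ)*(n.choose l:ℝ)*(-1:ℝ)^(j+n-k-l) *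
           (∑ i, ∑ q, xs i ^ j * ys q ^ n * p i q))
      = ∑ k ∈ Finset.range (⌊(a1:ℝ)*x⌋₊+1), ∑ l ∈ Finset.range (⌊(a2:ℝ)*y⌋₊+1),
       ∑ j ∈ Finset.Icc k a1, ∑ n ∈ Finset.Icc l a2, ∑ i, ∑ q,
         ((a1.choose j:ℝ)*(j.choose k:ℝ)*(-1:ℝ)^(j-k)*(xs i)^j) *
         ((a2.choose n:ℝ)*(n.choose l:ℝ)*(-1:ℝ)^(n-l)*(ys q)^n) * p i q := by
        refine Finset.sum_congr rfl fun k _ => Finset.sum_congr rfl fun l _ =>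
          Finset.sum_congr rfl fun j hj => Finset.sum_congr rfl fun n hn => ?_
        simp only [Finset.mem_Icc] at hj hn
        have hsig : (-1:ℝ)^(j+n-k-l) = (-1:ℝ)^(j-k) * (-1:ℝ)^(n-l) := by
          rw [← pow_add]; congr 1; omega
        rw [Finset.mul_sum]
        refine Finset.sum_congr rfl fun i _ => ?_
        rw [Finset.mul_sum]
        refine Finset.sum_congr rfl fun q _ => ?_
        rw [hsig]; ring
    _ = ∑ i, ∑ q,
        (∑ k ∈ Finset.range (⌊(a1:ℝ)*x⌋₊+1), ∑ j ∈ Finset.Icc k a1,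
          (a1.choose j:ℝ)*(j.choose k:ℝ)*(-1:ℝ)^(j-k)*(xs i)^j) *
        (∑ l ∈ Finset.range (⌊(a2:ℝ)*y⌋₊+1), ∑ n ∈ Finset.Icc l a2,
          (a2.choose n:ℝ)*(n.choose l:ℝ)*(-1:ℝ)^(n-l)*(ys q)^n) * p i q :=
        st15_fubini _ _ _ _ _ _ _
    _ = ∑ i, ∑ q, p i q *
        (∑ k ∈ Finset.range (⌊(a1:ℝ)*x⌋₊+1), (a1.choose k:ℝ)*(xs i)^k*(1-(xs i))^(a1-k)) *
        (∑ l ∈ Finset.range (⌊(a2:ℝ)*y⌋₊+1), (a2.choose l:ℝ)*(ys q)^l*(1-(ys q))^(a2-l)) := by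
        refine Finset.sum_congr rfl fun i _ => Finset.sum_congr rfl fun q _ => ?_
        rw [Finset.sum_congr rfl fun k (_ : k ∈ _) => st15_inner_sum a1 k (xs i),
            Finset.sum_congr rfl fun l (_ : l ∈ _) => st15_inner_sum a2 l (ys q)]
        ring

theorem stmt_15 (N : ℕ) (xs ys : Fin (N + 1) → ℝ) (p : Fin (N + 1) → Fin (N + 1) → ℝ)
    (hxs : ∀ i, xs i ∈ Set.Icc (0:ℝ) 1) (hys : ∀ j, ys j ∈ Set.Icc (0:ℝ) 1)
    (hp : ∀ i j, 0 ≤ p i j) (hsum : ∑ i, ∑ j, p i j = 1)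
    (F : ℝ → ℝ → ℝ)
    (hF : ∀ x y, F x y = ∑ i, ∑ j, p i j *
      Set.indicator (Set.Ico (0:ℝ) x) (fun _ => (1:ℝ)) (xs i) *
      Set.indicator (Set.Ico (0:ℝ) y) (fun _ => (1:ℝ)) (ys j))
    (m : ℕ → ℕ → ℝ) (hm : ∀ j n, m j n = ∑ i, ∑ k, xs i ^ j * ys k ^ n * p i k)
    (x y : ℝ) (hxy : (x, y) ∈ Set.Icc (0:ℝ) 1 ×ˢ Set.Icc (0:ℝ) 1)
    (hxne : ∀ i, x ≠ xs i) (hyne : ∀ j, y ≠ ys j) :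
    Tendsto (fun a : ℕ × ℕ =>
        ∑ k ∈ Finset.range (⌊(a.1 : ℝ) * x⌋₊ + 1),
          ∑ l ∈ Finset.range (⌊(a.2 : ℝ) * y⌋₊ + 1),
            ∑ j ∈ Finset.Icc k a.1, ∑ n ∈ Finset.Icc l a.2,
              (a.1.choose j : ℝ) * (j.choose k : ℝ) * (a.2.choose n : ℝ) * (n.choose l : ℝ) *
                (-1 : ℝ) ^ (j + n - k - l) * m j n)
      atTop (nhds (F x y)) := by
  obtain ⟨hx, hy⟩ := hxy
  -- rewrite the function using st15_eq
  have hfun : (fun a : ℕ × ℕ =>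
        ∑ k ∈ Finset.range (⌊(a.1 : ℝ) * x⌋₊ + 1),
          ∑ l ∈ Finset.range (⌊(a.2 : ℝ) * y⌋₊ + 1),
            ∑ j ∈ Finset.Icc k a.1, ∑ n ∈ Finset.Icc l a.2,
              (a.1.choose j : ℝ) * (j.choose k : ℝ) * (a.2.choose n : ℝ) * (n.choose l : ℝ) *
                (-1 : ℝ) ^ (j + n - k - l) * m j n)
      = fun a : ℕ × ℕ => ∑ i, ∑ q, p i q *
        (∑ k ∈ Finset.range (⌊(a.1:ℝ)*x⌋₊+1), (a.1.choose k:ℝ)*(xs i)^k*(1-(xs i))^(a.1-k)) *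
        (∑ l ∈ Finset.range (⌊(a.2:ℝ)*y⌋₊+1), (a.2.choose l:ℝ)*(ys q)^l*(1-(ys q))^(a.2-l)) := by
    funext a
    rw [← st15_eq (N+1) xs ys p x y a.1 a.2]
    refine Finset.sum_congr rfl fun k _ => Finset.sum_congr rfl fun l _ =>
      Finset.sum_congr rfl fun j _ => Finset.sum_congr rfl fun n _ => ?_
    rw [hm]
  rw [hfun]
  -- identify the limit
  have hFval : F x y = ∑ i, ∑ q, p i q *
      (if xs i < x then (1:ℝ) else 0) * (if ys q < y then (1:ℝ) else 0) := by
    rw [hF]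
    refine Finset.sum_congr rfl fun i _ => Finset.sum_congr rfl fun q _ => ?_
    rw [Set.indicator_apply, Set.indicator_apply]
    simp only [Set.mem_Ico, (hxs i).1, (hys q).1, true_and]
  rw [hFval]
  -- tendsto of a finite sum of products
  have hfst : Tendsto (Prod.fst : ℕ × ℕ → ℕ) atTop atTop := by
    rw [← prod_atTop_atTop_eq]; exact tendsto_fst
  have hsnd : Tendsto (Prod.snd : ℕ × ℕ → ℕ) atTop atTop := by
    rw [← prod_atTop_atTop_eq]; exact tendsto_snd
  refine tendsto_finset_sum _ fun i _ => tendsto_finset_sum _ fun q _ => ?_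
  have h1 : Tendsto (fun a : ℕ × ℕ =>
      ∑ k ∈ Finset.range (⌊(a.1:ℝ)*x⌋₊+1), (a.1.choose k:ℝ)*(xs i)^k*(1-(xs i))^(a.1-k))
      atTop (nhds (if xs i < x then (1:ℝ) else 0)) :=
    (st15_tendsto x (xs i) hx.1 hx.2 (hxs i).1 (hxs i).2
      (fun h => (hxne i) h.symm)).comp hfst
  have h2 : Tendsto (fun a : ℕ × ℕ =>
      ∑ l ∈ Finset.range (⌊(a.2:ℝ)*y⌋₊+1), (a.2.choose l:ℝ)*(ys q)^l*(1-(ys q))^(a.2-l))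
      atTop (nhds (if ys q < y then (1:ℝ) else 0)) :=
    (st15_tendsto y (ys q) hy.1 hy.2 (hys q).1 (hys q).2
      (fun h => (hyne q) h.symm)).comp hsnd
  exact ((tendsto_const_nhds.mul h1).mul h2)
end
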